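/- arXiv:1912.03852 — 6 statements merged into one kernel-verified Lean document; each statement's English description precedes it below -/
import Mathlib

section
/- Let b be an odd positive integer and a a real number with 0 < a ≤ 1. Then the improper integral ∫₀^∞ (sin x)^b / x^a dx converges: the function x ↦ (sin x)^b / x^a is Lebesgue integrable on (0, T] for every T > 0, and there exists a real number L such that ∫_{(0,T]} (sin x)^b / x^a dx → L as T → ∞. -/
open Real MeasureTheory Set Filter Topology

/-- If `b` is an odd positive integer and `0 < a ≤ 1`, then the improper integral
`∫₀^∞ sin x ^ b / x ^ a dx` converges. -/
theorem stmt2 (b : ℕ) (hb : 0 < b) (hodd : Odd b) (a : ℝ) (ha0 : 0 < a) (ha1 : a ≤ 1) :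
    (∀ T : ℝ, 0 < T →
      IntegrableOn (fun x : ℝ => Real.sin x ^ b / x ^ a) (Set.Ioc 0 T)) ∧
    ∃ L : ℝ,
      Tendsto (fun T : ℝ => ∫ x in Set.Ioc 0 T, Real.sin x ^ b / x ^ a)
        atTop (𝓝 L) := by
  -- the integrand
  set φ : ℝ → ℝ := fun x => Real.sin x ^ b / x ^ a with hφ
  -- measurability
  have hmeas : Measurable φ := by
    rw [hφ]; fun_prop
  -- Part 1 : integrability on `Ioc 0 T`
  have hpart1 : ∀ T : ℝ, 0 < T → IntegrableOn φ (Set.Ioc 0 T) := by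
    intro T hT
    apply Measure.integrableOn_of_bounded (M := T ^ (1 - a)) measure_Ioc_lt_top.ne
      hmeas.aestronglyMeasurable
    filter_upwards [ae_restrict_mem measurableSet_Ioc] with x hx
    obtain ⟨hx0, hxT⟩ := hx
    have hxa : (0:ℝ) < x ^ a := Real.rpow_pos_of_pos hx0 a
    have h1 : ‖φ x‖ = |Real.sin x| ^ b / x ^ a := by
      rw [hφ]; rw [Real.norm_eq_abs, abs_div, abs_pow, abs_of_pos hxa]
    rw [h1]
    have h2 : |Real.sin x| ^ b ≤ |Real.sin x| := by
      simpa using pow_le_pow_of_le_one (abs_nonneg _) (abs_sin_le_one x) hb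
    have h3 : |Real.sin x| ≤ x := by
      have := Real.abs_sin_le_abs (x := x)
      rwa [abs_of_pos hx0] at this
    calc |Real.sin x| ^ b / x ^ a ≤ x / x ^ a := by gcongr; exact h2.trans h3
      _ = x ^ (1 - a) := by
          rw [Real.rpow_sub hx0, Real.rpow_one]
      _ ≤ T ^ (1 - a) := by
          apply Real.rpow_le_rpow hx0.le hxT (by linarith)
  refine ⟨hpart1, ?_⟩
  -- setup for part 2
  set f : ℝ → ℝ := fun x => Real.sin x ^ b with hf
  have hfc : Continuous f := Real.continuous_sin.pow b
  set F : ℝ → ℝ := fun x => ∫ t in (0:ℝ)..x, f t with hF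
  have hFderiv : ∀ x : ℝ, HasDerivAt F (f x) x := fun x =>
    (hfc.integral_hasStrictDerivAt 0 x).hasDerivAt
  have hFc : Continuous F := by
    apply continuous_iff_continuousAt.2
    exact fun x => (hFderiv x).continuousAt
  -- `f` is `2π`-periodic and its integral over a period vanishes
  have hfper : Function.Periodic f (2 * π) := fun x => by
    simp [hf, Real.sin_add_two_pi]
  have hint0 : ∫ t in (0:ℝ)..(2 * π), f t = 0 := by
    have hsplit : (∫ t in (0:ℝ)..π, f t) + ∫ t in π..(2*π), f t
        = ∫ t in (0:ℝ)..(2*π), f t :=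
      intervalIntegral.integral_add_adjacent_intervals (hfc.intervalIntegrable _ _)
        (hfc.intervalIntegrable _ _)
    have h2 : ∫ t in π..(2*π), f t = - ∫ t in (0:ℝ)..π, f t := by
      have := intervalIntegral.integral_comp_add_right (a := 0) (b := π) (d := π)
        (f := f)
      rw [zero_add] at this
      rw [show (2:ℝ)*π = π + π by ring, ← this, ← intervalIntegral.integral_neg]
      apply intervalIntegral.integral_congr
      intro x _
      simp only [hf]
      rw [Real.sin_add_pi, hodd.neg_pow]
    rw [← hsplit, h2]; ring
  -- hence `F` is periodic, continuous, so bounded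
  have hFper : Function.Periodic F (2 * π) := by
    intro x
    have hadd : F x + (∫ t in x..(x + 2*π), f t) = F (x + 2*π) :=
      intervalIntegral.integral_add_adjacent_intervals (hfc.intervalIntegrable _ _)
        (hfc.intervalIntegrable _ _)
    have hper : (∫ t in x..(x + 2*π), f t) = ∫ t in (0:ℝ)..(0 + 2*π), f t :=
      hfper.intervalIntegral_add_eq x 0
    rw [← hadd, hper, zero_add, hint0, add_zero]
  obtain ⟨C, hC⟩ : ∃ C : ℝ, ∀ x : ℝ, ‖F x‖ ≤ C := by
    have hbd := hFper.isBounded_of_continuous (by positivity) hFc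
    obtain ⟨C, hC⟩ := isBounded_iff_forall_norm_le.1 hbd
    exact ⟨C, fun x => hC _ (mem_range_self x)⟩
  -- derivative of x ^ (-a)
  set g : ℝ → ℝ := fun x => x ^ (-a) with hg
  set g' : ℝ → ℝ := fun x => -a * x ^ (-a - 1) with hg'
  have hgderiv : ∀ x : ℝ, x ≠ 0 → HasDerivAt g (g' x) x := fun x hx =>
    Real.hasDerivAt_rpow_const (Or.inl hx)
  have hg'cont : ContinuousOn g' (Set.Ici (1:ℝ)) := by
    apply continuousOn_const.mul
    intro x hx
    exact (Real.continuousAt_rpow_const x _ (Or.inl (by simp at hx; positivity))).continuousWithinAt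
  -- the tail integrand is integrable on `Ioi 1`
  have htail : IntegrableOn (fun x => F x * g' x) (Set.Ioi (1:ℝ)) := by
    have hrpow : IntegrableOn (fun x : ℝ => x ^ (-a - 1)) (Set.Ioi (1:ℝ)) :=
      integrableOn_Ioi_rpow_of_lt (by linarith) one_pos
    apply Integrable.mono' ((hrpow.const_mul (C * a)))
    · exact (hFc.continuousOn.mul (hg'cont.mono (Set.Ioi_subset_Ici le_rfl))).aestronglyMeasurable
        measurableSet_Ioi
    · filter_upwards [ae_restrict_mem measurableSet_Ioi] with x hx
      have hx1 : (1:ℝ) < x := hx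
      have hxp : (0:ℝ) < x ^ (-a - 1) := Real.rpow_pos_of_pos (by linarith) _
      rw [norm_mul]
      calc ‖F x‖ * ‖g' x‖ ≤ C * ‖g' x‖ := by
            apply mul_le_mul_of_nonneg_right (hC x) (norm_nonneg _)
        _ = C * (a * x ^ (-a - 1)) := by
            rw [hg']; simp [abs_of_pos hxp, abs_of_pos ha0]
        _ = C * a * x ^ (-a - 1) := by ring
  -- the boundary term tends to 0
  have hbound : Tendsto (fun T : ℝ => F T * T ^ (-a)) atTop (𝓝 0) := by
    apply squeeze_zero_norm' (a := fun T : ℝ => C * T ^ (-a))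
    · filter_upwards [eventually_ge_atTop (1:ℝ)] with T hT
      have hTp : (0:ℝ) < T ^ (-a) := Real.rpow_pos_of_pos (by linarith) _
      rw [norm_mul, Real.norm_eq_abs (T ^ (-a)), abs_of_pos hTp]
      exact mul_le_mul_of_nonneg_right (hC T) hTp.le
    · simpa using (tendsto_rpow_neg_atTop ha0).const_mul C
  -- tail convergence
  have htailconv : Tendsto (fun T : ℝ => ∫ x in (1:ℝ)..T, F x * g' x) atTop
      (𝓝 (∫ x in Set.Ioi (1:ℝ), F x * g' x)) :=
    intervalIntegral_tendsto_integral_Ioi 1 htail tendsto_id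
  -- integration by parts on `[1, T]`
  have hibp : ∀ T : ℝ, 1 ≤ T → ∫ x in (1:ℝ)..T, φ x
      = F T * T ^ (-a) - F 1 * 1 - ∫ x in (1:ℝ)..T, F x * g' x := by
    intro T hT
    have huIcc : Set.uIcc (1:ℝ) T = Set.Icc 1 T := Set.uIcc_of_le hT
    have key : ∫ x in (1:ℝ)..T, f x * g x
        = F T * g T - F 1 * g 1 - ∫ x in (1:ℝ)..T, F x * g' x := by
      have := intervalIntegral.integral_mul_deriv_eq_deriv_mul
        (u := F) (v := g) (u' := f) (v' := g')
        (fun x hx => hFderiv x)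
        (fun x hx => by
          rw [huIcc] at hx
          exact hgderiv x (by have := hx.1; positivity))
        (hfc.intervalIntegrable _ _)
        (by
          apply ContinuousOn.intervalIntegrable
          rw [huIcc]
          exact hg'cont.mono (Set.Icc_subset_Ici_self))
      -- `this : ∫ F * g' = F T * g T - F 1 * g 1 - ∫ f * g`
      linarith [this]
    have hcong : ∫ x in (1:ℝ)..T, φ x = ∫ x in (1:ℝ)..T, f x * g x := by
      apply intervalIntegral.integral_congr
      intro x hx
      rw [huIcc] at hx
      have hx0 : (0:ℝ) < x := lt_of_lt_of_le one_pos hx.1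
      rw [hφ, hg, hf]
      simp only
      rw [Real.rpow_neg hx0.le, div_eq_mul_inv]
    rw [hcong, key]
    simp only [hg, Real.one_rpow]
  -- convergence of `∫ in 1..T`
  have hmain : Tendsto (fun T : ℝ => ∫ x in (1:ℝ)..T, φ x) atTop
      (𝓝 (0 - F 1 * 1 - ∫ x in Set.Ioi (1:ℝ), F x * g' x)) := by
    apply Tendsto.congr' _ (((hbound.sub tendsto_const_nhds).sub htailconv))
    filter_upwards [eventually_ge_atTop (1:ℝ)] with T hT
    exact (hibp T hT).symm
  -- assemble
  refine ⟨(∫ x in Set.Ioc (0:ℝ) 1, φ x)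
      + (0 - F 1 * 1 - ∫ x in Set.Ioi (1:ℝ), F x * g' x), ?_⟩
  apply Tendsto.congr' _ (tendsto_const_nhds.add hmain)
  filter_upwards [eventually_ge_atTop (1:ℝ)] with T hT
  have hint01 : IntegrableOn φ (Set.Ioc (0:ℝ) 1) := hpart1 1 one_pos
  have hint1T : IntegrableOn φ (Set.Ioc (1:ℝ) T) :=
    (hpart1 T (by linarith)).mono_set (Set.Ioc_subset_Ioc (by norm_num) le_rfl)
  rw [intervalIntegral.integral_of_le hT, ← setIntegral_union (Set.Ioc_disjoint_Ioc_of_le le_rfl)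
    measurableSet_Ioc hint01 hint1T, Set.Ioc_union_Ioc_eq_Ioc zero_le_one hT]
end

section
/- Let b be a positive integer and a a positive real number. Then the improper integral ∫₀^∞ (sin x)^b / x^a dx converges (i.e., the function is Lebesgue integrable on (0,T] for every T > 0 and ∫_{(0,T]} (sin x)^b / x^a dx has a finite limit as T → ∞) if and only if either (1 < a < b + 1) or (0 < a ≤ 1 and b is odd). -/
open Real MeasureTheory Set Filter Topology

namespace Stmt4Aux
open intervalIntegral Function

noncomputable def f (b : ℕ) (a : ℝ) : ℝ → ℝ := fun x => Real.sin x ^ b / x ^ a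

lemma contOn (b : ℕ) (a : ℝ) : ContinuousOn (f b a) (Ioi 0) := fun x hx =>
  (((Real.continuous_sin.pow b).continuousAt.div
    (Real.continuousAt_rpow_const x a (Or.inl (ne_of_gt hx)))
    (Real.rpow_pos_of_pos hx a).ne')).continuousWithinAt

lemma f_bound {b : ℕ} {a : ℝ} {x : ℝ} (hx : 0 < x) : ‖f b a x‖ ≤ x ^ ((b : ℝ) - a) := by
  have hsin : |Real.sin x| ≤ x := (Real.abs_sin_le_abs).trans_eq (abs_of_pos hx)
  have h1 : ‖f b a x‖ = |Real.sin x| ^ b / x ^ a := by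
    rw [f, Real.norm_eq_abs, abs_div, abs_pow, abs_of_pos (Real.rpow_pos_of_pos hx a)]
  rw [h1, Real.rpow_sub hx, Real.rpow_natCast]
  exact div_le_div_of_nonneg_right (pow_le_pow_left₀ (abs_nonneg _) hsin b)
    (Real.rpow_pos_of_pos hx a).le

lemma integrableOn_rpow_Ioc {s T : ℝ} (hT : 0 < T) (hs : -1 < s) :
    IntegrableOn (fun x : ℝ => x ^ s) (Ioc 0 T) := by
  rw [integrableOn_Ioc_iff_integrableOn_Ioo]
  exact (integrableOn_Ioo_rpow_iff hT).mpr hs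

lemma integrableOn_f (b : ℕ) {a : ℝ} (ha : 0 < a) (hab : a < (b : ℝ) + 1) (T : ℝ) :
    IntegrableOn (f b a) (Ioc 0 T) := by
  rcases le_or_gt T 0 with hT | hT
  · rw [Ioc_eq_empty (not_lt.mpr hT)]
    exact integrableOn_empty
  · apply Integrable.mono' (integrableOn_rpow_Ioc (s := (b:ℝ) - a) hT (by linarith))
    · exact ((contOn b a).mono (Ioc_subset_Ioi_self)).aestronglyMeasurable measurableSet_Ioc
    · filter_upwards [ae_restrict_mem measurableSet_Ioc] with x hx
      exact f_bound hx.1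

end Stmt4Aux

namespace Stmt4Aux
open Real MeasureTheory Set Filter Topology intervalIntegral

lemma contOn_rpow (s : ℝ) : ContinuousOn (fun x : ℝ => x ^ s) (Ioi 0) := fun x hx =>
  (Real.continuousAt_rpow_const x s (Or.inl (ne_of_gt hx))).continuousWithinAt

lemma not_integrableOn_f (b : ℕ) {a : ℝ} (hab : (b : ℝ) + 1 ≤ a) :
    ¬ IntegrableOn (f b a) (Ioc 0 1) := by
  intro h
  have hc : (0:ℝ) < (2 / π) ^ b := by positivity
  have key : IntegrableOn (fun x : ℝ => (2 / π) ^ b * x ^ ((b : ℝ) - a)) (Ioo 0 1) := by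
    apply Integrable.mono' (h.mono_set Ioo_subset_Ioc_self)
    · exact (((contOn_rpow ((b:ℝ) - a)).const_smul ((2/π)^b)).mono
        (Ioo_subset_Ioi_self)).aestronglyMeasurable measurableSet_Ioo
    · filter_upwards [ae_restrict_mem measurableSet_Ioo] with x hx
      have hx0 : 0 < x := hx.1
      have hx2 : x ≤ π / 2 := by
        have := Real.pi_gt_three
        linarith [hx.2.le]
      have hsin : 2 / π * x ≤ Real.sin x := Real.mul_le_sin hx0.le hx2
      have hsinpos : 0 < 2 / π * x := by positivity
      have hpow : (2 / π) ^ b * x ^ (b : ℕ) ≤ Real.sin x ^ b := by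
        rw [← mul_pow]; exact pow_le_pow_left₀ hsinpos.le hsin b
      have hnorm : ‖(2 / π) ^ b * x ^ ((b:ℝ) - a)‖ = (2 / π) ^ b * x ^ ((b:ℝ) - a) := by
        rw [Real.norm_eq_abs, abs_of_pos (by positivity)]
      rw [hnorm, Real.rpow_sub hx0, Real.rpow_natCast, f, ← mul_div_assoc]
      exact div_le_div_of_nonneg_right hpow (Real.rpow_pos_of_pos hx0 a).le
  have key2 : IntegrableOn (fun x : ℝ => x ^ ((b : ℝ) - a)) (Ioo 0 1) := by
    have := key.const_mul (((2 / π) ^ b)⁻¹)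
    simpa [← mul_assoc, inv_mul_cancel₀ hc.ne', IntegrableOn] using this
  have := (integrableOn_Ioo_rpow_iff one_pos).mp key2
  linarith

end Stmt4Aux

namespace Stmt4Aux
open Real MeasureTheory Set Filter Topology intervalIntegral Function

noncomputable def G (b : ℕ) : ℝ → ℝ := fun x => ∫ t in (0:ℝ)..x, Real.sin t ^ b

lemma contG (b : ℕ) : Continuous (G b) :=
  intervalIntegral.continuous_primitive
    (fun u v => ((Real.continuous_sin.pow b).intervalIntegrable u v)) 0

lemma hasDerivG (b : ℕ) (x : ℝ) : HasDerivAt (G b) (Real.sin x ^ b) x :=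
  ((Real.continuous_sin.pow b).integral_hasStrictDerivAt 0 x).hasDerivAt

lemma sin_pow_per (b : ℕ) : Periodic (fun t => Real.sin t ^ b) (2 * π) :=
  fun x => by simp [Real.sin_periodic x]

lemma integral_two_pi_odd {b : ℕ} (hbodd : Odd b) :
    ∫ t in (0:ℝ)..(2*π), Real.sin t ^ b = 0 := by
  obtain ⟨k, rfl⟩ := hbodd
  induction k with
  | zero => simp [integral_sin, Real.cos_two_pi]
  | succ n ih =>
    have h : 2 * (n+1) + 1 = (2 * n + 1) + 2 := by ring
    rw [h, integral_sin_pow]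
    simp [Real.sin_two_pi, ih]

lemma G_periodic {b : ℕ} (hbodd : Odd b) : Periodic (G b) (2 * π) := by
  intro x
  have h1 : G b (x + 2 * π) - G b x = ∫ t in x..(x + 2*π), Real.sin t ^ b := by
    rw [G, G, ← intervalIntegral.integral_add_adjacent_intervals (f := fun t => Real.sin t ^ b)
      ((Real.continuous_sin.pow b).intervalIntegrable 0 x)
      ((Real.continuous_sin.pow b).intervalIntegrable x (x + 2*π))]
    ring
  have h2 : (∫ t in x..(x + 2*π), Real.sin t ^ b) = ∫ t in (0:ℝ)..(0 + 2*π), Real.sin t ^ b :=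
    (sin_pow_per b).intervalIntegral_add_eq x 0
  have h3 := integral_two_pi_odd hbodd
  rw [zero_add] at h2
  have := h1.trans (h2.trans h3)
  linarith [this]

lemma G_bounded {b : ℕ} (hbodd : Odd b) : ∃ C : ℝ, ∀ x, ‖G b x‖ ≤ C := by
  have hbd := (G_periodic hbodd).isBounded_of_continuous (by positivity : (0:ℝ) < 2*π).ne' (contG b)
  obtain ⟨C, hC⟩ := isBounded_iff_forall_norm_le.mp hbd
  exact ⟨C, fun x => hC _ (mem_range_self x)⟩

end Stmt4Aux

namespace Stmt4Aux
open Real MeasureTheory Set Filter Topology intervalIntegral Function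

lemma intervalIntegrable_f (b : ℕ) {a : ℝ} (ha : 0 < a) (hab : a < (b:ℝ) + 1)
    {u v : ℝ} (hu : 0 ≤ u) (huv : u ≤ v) : IntervalIntegrable (f b a) volume u v :=
  (intervalIntegrable_iff_integrableOn_Ioc_of_le huv).mpr
    ((integrableOn_f b ha hab v).mono_set (Ioc_subset_Ioc hu le_rfl))

lemma tendsto_odd (b : ℕ) (hbodd : Odd b) {a : ℝ} (ha : 0 < a) (ha1 : a ≤ 1) :
    ∃ L, Tendsto (fun T => ∫ x in Ioc 0 T, f b a x) atTop (𝓝 L) := by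
  obtain ⟨C, hC⟩ := G_bounded hbodd
  have hb1 : (1:ℝ) ≤ (b:ℝ) := by
    obtain ⟨k, rfl⟩ := hbodd; push_cast; linarith [Nat.cast_nonneg (α := ℝ) k]
  have hab : a < (b:ℝ) + 1 := by linarith
  set g : ℝ → ℝ := fun x => G b x * x ^ (-a - 1) with hg
  -- integrability of g on Ioi 1
  have hgcont : ContinuousOn g (Ioi 0) := (contG b).continuousOn.mul (contOn_rpow (-a - 1))
  have hgint : IntegrableOn g (Ioi 1) := by
    apply Integrable.mono'
      ((integrableOn_Ioi_rpow_of_lt (by linarith : -a - 1 < -1) one_pos).const_mul C)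
    · exact (hgcont.mono (Ioi_subset_Ioi zero_le_one)).aestronglyMeasurable measurableSet_Ioi
    · filter_upwards [ae_restrict_mem measurableSet_Ioi] with x hx
      have hx0 : (0:ℝ) < x := lt_trans one_pos hx
      rw [hg, norm_mul, Real.norm_eq_abs (x ^ (-a-1)), abs_of_pos (Real.rpow_pos_of_pos hx0 _)]
      exact mul_le_mul_of_nonneg_right (hC x) (Real.rpow_pos_of_pos hx0 _).le
  have hJ : Tendsto (fun T => ∫ x in (1:ℝ)..T, g x) atTop (𝓝 (∫ x in Ioi 1, g x)) :=
    intervalIntegral_tendsto_integral_Ioi 1 hgint tendsto_id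
  -- u
  set u : ℝ → ℝ := fun x => G b x * x ^ (-a) with hu
  have hu0 : Tendsto u atTop (𝓝 0) := by
    have h1 : ∀ᶠ x : ℝ in atTop, ‖u x‖ ≤ C * x ^ (-a) := by
      filter_upwards [eventually_gt_atTop (0:ℝ)] with x hx
      rw [hu, norm_mul, Real.norm_eq_abs (x ^ (-a)), abs_of_pos (Real.rpow_pos_of_pos hx _)]
      exact mul_le_mul_of_nonneg_right (hC x) (Real.rpow_pos_of_pos hx _).le
    have h2 : Tendsto (fun x : ℝ => C * x ^ (-a)) atTop (𝓝 0) := by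
      simpa using (tendsto_rpow_neg_atTop ha).const_mul C
    exact squeeze_zero_norm' h1 h2
  -- the parts identity
  have key : ∀ T : ℝ, 1 ≤ T →
      ∫ x in (1:ℝ)..T, f b a x = u T - u 1 + a * ∫ x in (1:ℝ)..T, g x := by
    intro T hT
    have hIcc : uIcc (1:ℝ) T = Icc 1 T := uIcc_of_le hT
    have hsub : uIcc (1:ℝ) T ⊆ Ioi 0 := by
      rw [hIcc]; exact fun x hx => lt_of_lt_of_le one_pos hx.1
    set d : ℝ → ℝ := fun x => Real.sin x ^ b * x ^ (-a) + G b x * (-a * x ^ (-a - 1)) with hd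
    have hderiv : ∀ x ∈ uIcc (1:ℝ) T, HasDerivAt u (d x) x := by
      intro x hx
      have hx0 : (0:ℝ) < x := hsub hx
      exact (hasDerivG b x).mul (Real.hasDerivAt_rpow_const (p := -a) (Or.inl hx0.ne'))
    have hdcont : ContinuousOn d (Ioi 0) :=
      ((Real.continuous_sin.pow b).continuousOn.mul (contOn_rpow (-a))).add
        ((contG b).continuousOn.mul ((contOn_rpow (-a-1)).const_smul (-a)))
    have hdint : IntervalIntegrable d volume 1 T := (hdcont.mono hsub).intervalIntegrable
    have hparts : ∫ x in (1:ℝ)..T, d x = u T - u 1 :=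
      intervalIntegral.integral_eq_sub_of_hasDerivAt hderiv hdint
    have h1int : IntervalIntegrable (fun x => Real.sin x ^ b * x ^ (-a)) volume 1 T :=
      (((Real.continuous_sin.pow b).continuousOn.mul (contOn_rpow (-a))).mono hsub).intervalIntegrable
    have h2int : IntervalIntegrable (fun x => G b x * (-a * x ^ (-a - 1))) volume 1 T :=
      (((contG b).continuousOn.mul ((contOn_rpow (-a-1)).const_smul (-a))).mono hsub).intervalIntegrable
    have hsplit : ∫ x in (1:ℝ)..T, d x =
        (∫ x in (1:ℝ)..T, Real.sin x ^ b * x ^ (-a)) +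
          ∫ x in (1:ℝ)..T, G b x * (-a * x ^ (-a - 1)) :=
      intervalIntegral.integral_add h1int h2int
    have hcongr : ∫ x in (1:ℝ)..T, f b a x = ∫ x in (1:ℝ)..T, Real.sin x ^ b * x ^ (-a) := by
      apply intervalIntegral.integral_congr
      intro x hx
      have hx0 : (0:ℝ) < x := hsub hx
      show Real.sin x ^ b / x ^ a = Real.sin x ^ b * x ^ (-a)
      rw [Real.rpow_neg hx0.le, div_eq_mul_inv]
    have hconst : ∫ x in (1:ℝ)..T, G b x * (-a * x ^ (-a - 1)) = -a * ∫ x in (1:ℝ)..T, g x := by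
      have heq : (fun x : ℝ => G b x * (-a * x ^ (-a - 1))) = fun x => -a * g x := by
        funext x; simp only [hg]; ring
      rw [heq, intervalIntegral.integral_const_mul]
    rw [hcongr]
    have := hparts
    rw [hsplit, hconst] at this
    linarith
  -- limit of ∫ 1..T f
  have hlim1 : Tendsto (fun T => ∫ x in (1:ℝ)..T, f b a x) atTop
      (𝓝 (0 - u 1 + a * ∫ x in Ioi 1, g x)) := by
    apply Tendsto.congr' ?_ (((hu0.sub_const (u 1))).add (hJ.const_mul a))
    filter_upwards [eventually_ge_atTop (1:ℝ)] with T hT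
    exact (key T hT).symm
  refine ⟨(∫ x in (0:ℝ)..1, f b a x) + (0 - u 1 + a * ∫ x in Ioi 1, g x), ?_⟩
  apply Tendsto.congr' ?_ (hlim1.const_add _)
  filter_upwards [eventually_ge_atTop (1:ℝ)] with T hT
  rw [← intervalIntegral.integral_of_le (le_trans zero_le_one hT),
    ← intervalIntegral.integral_add_adjacent_intervals
      (intervalIntegrable_f b ha hab le_rfl zero_le_one)
      (intervalIntegrable_f b ha hab zero_le_one hT)]

end Stmt4Aux

namespace Stmt4Aux
open Real MeasureTheory Set Filter Topology intervalIntegral Function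

lemma tendsto_big (b : ℕ) {a : ℝ} (ha : 1 < a) (hab : a < (b:ℝ) + 1) :
    ∃ L, Tendsto (fun T => ∫ x in Ioc 0 T, f b a x) atTop (𝓝 L) := by
  have ha0 : 0 < a := lt_trans one_pos ha
  have hint : IntegrableOn (f b a) (Ioi 0) := by
    have h1 : IntegrableOn (f b a) (Ioc 0 1) := integrableOn_f b ha0 hab 1
    have h2 : IntegrableOn (f b a) (Ioi 1) := by
      apply Integrable.mono' (integrableOn_Ioi_rpow_of_lt (by linarith : -a < -1) one_pos)
      · exact ((contOn b a).mono (Ioi_subset_Ioi zero_le_one)).aestronglyMeasurable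
          measurableSet_Ioi
      · filter_upwards [ae_restrict_mem measurableSet_Ioi] with x hx
        have hx0 : (0:ℝ) < x := lt_trans one_pos hx
        have h1' : |Real.sin x ^ b| ≤ 1 := by
          rw [abs_pow]; exact pow_le_one₀ (abs_nonneg _) (Real.abs_sin_le_one x)
        show ‖Real.sin x ^ b / x ^ a‖ ≤ x ^ (-a)
        rw [Real.norm_eq_abs, abs_div, abs_of_pos (Real.rpow_pos_of_pos hx0 a),
          Real.rpow_neg hx0.le, div_eq_mul_inv]
        exact mul_le_of_le_one_left (inv_nonneg.mpr (Real.rpow_pos_of_pos hx0 a).le) h1'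
    have hsplit : Ioi (0:ℝ) = Ioc 0 1 ∪ Ioi 1 := (Ioc_union_Ioi_eq_Ioi zero_le_one).symm
    rw [IntegrableOn, hsplit]
    exact h1.union h2
  have h2 : Tendsto (fun T : ℝ => ∫ x in (0:ℝ)..T, f b a x) atTop
      (𝓝 (∫ x in Ioi (0:ℝ), f b a x)) :=
    intervalIntegral_tendsto_integral_Ioi 0 hint tendsto_id
  have heq : (fun T : ℝ => ∫ x in (0:ℝ)..T, f b a x) =ᶠ[atTop]
      fun T : ℝ => ∫ x in Ioc 0 T, f b a x := by
    filter_upwards [eventually_ge_atTop (0:ℝ)] with T hT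
    exact intervalIntegral.integral_of_le hT
  exact ⟨_, Tendsto.congr' heq h2⟩

end Stmt4Aux

namespace Stmt4Aux
open Real MeasureTheory Set Filter Topology intervalIntegral Function

lemma even_diverges (b : ℕ) (hb : 0 < b) (hbe : Even b) {a : ℝ} (ha : 0 < a) (ha1 : a ≤ 1)
    (hint : ∀ T : ℝ, 0 < T → IntegrableOn (f b a) (Ioc 0 T)) :
    ¬ ∃ L, Tendsto (fun T => ∫ x in Ioc 0 T, f b a x) atTop (𝓝 L) := by
  rintro ⟨L, hL⟩
  have hpi : (0:ℝ) < π := Real.pi_pos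
  set c := ∫ x in (0:ℝ)..π, Real.sin x ^ b with hc
  have hcpos : 0 < c := integral_sin_pow_pos b
  have hper : Periodic (fun t => Real.sin t ^ b) π := by
    intro x
    simp only [Real.sin_add_pi]
    exact hbe.neg_pow _
  have hfnonneg : ∀ x : ℝ, 0 ≤ x → 0 ≤ f b a x := by
    intro x hx
    rcases eq_or_lt_of_le hx with h | h
    · have : f b a x = 0 := by
        rw [f, ← h, Real.sin_zero, zero_pow hb.ne', zero_div]
      rw [this]
    · exact div_nonneg (hbe.pow_nonneg _) (Real.rpow_pos_of_pos h a).le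
  have hII : ∀ {u v : ℝ}, 0 ≤ u → u ≤ v → IntervalIntegrable (f b a) volume u v := by
    intro u v hu huv
    rcases eq_or_lt_of_le (hu.trans huv) with h0 | h0
    · have : u = v := le_antisymm huv (by linarith [hu, h0.symm.le])
      rw [this]
    · exact (intervalIntegrable_iff_integrableOn_Ioc_of_le huv).mpr
        ((hint v h0).mono_set (Ioc_subset_Ioc hu le_rfl))
  set F : ℝ → ℝ := fun T => ∫ x in (0:ℝ)..T, f b a x with hF
  have hFI : ∀ {T : ℝ}, 0 ≤ T → F T = ∫ x in Ioc 0 T, f b a x := fun {T} hT =>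
    intervalIntegral.integral_of_le hT
  -- F is bounded by L
  have hFle : ∀ T : ℝ, 0 ≤ T → F T ≤ L := by
    intro T hT
    apply ge_of_tendsto hL
    filter_upwards [eventually_ge_atTop T, eventually_ge_atTop (0:ℝ)] with S hS hS0
    show F T ≤ ∫ x in Ioc 0 S, f b a x
    rw [← hFI hS0]
    show (∫ x in (0:ℝ)..T, f b a x) ≤ ∫ x in (0:ℝ)..S, f b a x
    rw [← intervalIntegral.integral_add_adjacent_intervals (hII le_rfl hT) (hII hT hS)]
    have hpos : 0 ≤ ∫ x in T..S, f b a x :=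
      intervalIntegral.integral_nonneg hS fun u hu => hfnonneg u (hT.trans hu.1)
    linarith [hpos]
  -- lower bound per block
  have hblock : ∀ n : ℕ, c / (((n:ℝ) + 1) * π) ≤ ∫ x in ((n:ℝ)*π)..(((n:ℝ)+1)*π), f b a x := by
    intro n
    have hn0 : (0:ℝ) ≤ (n:ℝ) * π := by positivity
    have hstep : (n:ℝ)*π ≤ ((n:ℝ)+1)*π := by nlinarith [hpi]
    have hK1 : (1:ℝ) ≤ ((n:ℝ)+1)*π := by nlinarith [Real.pi_gt_three, Nat.cast_nonneg (α := ℝ) n]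
    have hconst : (∫ x in ((n:ℝ)*π)..(((n:ℝ)+1)*π), Real.sin x ^ b / (((n:ℝ)+1)*π))
        = c / (((n:ℝ)+1)*π) := by
      rw [intervalIntegral.integral_div]
      congr 1
      rw [show ((n:ℝ)+1)*π = (n:ℝ)*π + π by ring, hper.intervalIntegral_add_eq ((n:ℝ)*π) 0,
        zero_add, hc]
    rw [← hconst]
    apply intervalIntegral.integral_mono_on hstep
      (((Real.continuous_sin.pow b).div_const _).intervalIntegrable _ _) (hII hn0 hstep)
    intro x hx
    have hx0 : (0:ℝ) ≤ x := le_trans hn0 hx.1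
    rcases eq_or_lt_of_le hx0 with h0 | h0
    · show Real.sin x ^ b / (((n:ℝ)+1)*π) ≤ f b a x
      simp [f, ← h0, Real.sin_zero, zero_pow hb.ne']
    · have hxa : x ^ a ≤ ((n:ℝ)+1)*π := by
        rcases le_or_gt x 1 with hx1 | hx1
        · exact (Real.rpow_le_one hx0 hx1 ha.le).trans hK1
        · calc x ^ a ≤ x ^ (1:ℝ) := Real.rpow_le_rpow_of_exponent_le hx1.le ha1
            _ = x := Real.rpow_one x
            _ ≤ ((n:ℝ)+1)*π := hx.2
      show Real.sin x ^ b / (((n:ℝ)+1)*π) ≤ f b a x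
      rw [f]
      gcongr
      exact hbe.pow_nonneg _
  -- partial sums lower bound
  have hsum : ∀ n : ℕ, (∑ k ∈ Finset.range n, c / (((k:ℝ) + 1) * π)) ≤ F ((n:ℝ) * π) := by
    intro n
    induction n with
    | zero =>
      simp only [Finset.range_zero, Finset.sum_empty, Nat.cast_zero, zero_mul]
      show (0:ℝ) ≤ ∫ x in (0:ℝ)..0, f b a x
      simp
    | succ m ih =>
      have hm0 : (0:ℝ) ≤ (m:ℝ)*π := by positivity
      have hstep : (m:ℝ)*π ≤ ((m:ℝ)+1)*π := by nlinarith [hpi]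
      have h1 : F (((m:ℝ)+1) * π) =
          F ((m:ℝ)*π) + ∫ x in ((m:ℝ)*π)..(((m:ℝ)+1)*π), f b a x := by
        show (∫ x in (0:ℝ)..(((m:ℝ)+1)*π), f b a x) = _
        rw [← intervalIntegral.integral_add_adjacent_intervals (hII le_rfl hm0)
          (hII hm0 hstep)]
      rw [Finset.sum_range_succ]
      push_cast
      rw [h1] at *
      linarith [hblock m, ih]
  -- divergence of harmonic-like sum
  have hdiv : Tendsto (fun n : ℕ => ∑ k ∈ Finset.range n, c / (((k:ℝ)+1) * π)) atTop atTop := by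
    have h0 : (fun n : ℕ => ∑ k ∈ Finset.range n, c / (((k:ℝ)+1) * π))
        = fun n : ℕ => (c/π) * ∑ k ∈ Finset.range n, 1 / ((k:ℝ)+1) := by
      funext n
      rw [Finset.mul_sum]
      apply Finset.sum_congr rfl
      intro k _
      have : (c/π) * (1/((k:ℝ)+1)) = c / (((k:ℝ)+1)*π) := by
        rw [div_mul_div_comm, mul_one, mul_comm]
      exact this.symm
    rw [h0]
    exact Real.tendsto_sum_range_one_div_nat_succ_atTop.const_mul_atTop (by positivity)
  obtain ⟨n, hn⟩ := (hdiv.eventually (eventually_gt_atTop L)).exists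
  have hle := hFle ((n:ℝ)*π) (by positivity)
  linarith [hsum n]

end Stmt4Aux

open Real MeasureTheory Set Filter Topology


/-- For a positive integer `b` and a positive real `a`, the improper integral
`∫₀^∞ sin x ^ b / x ^ a dx` converges iff `1 < a < b + 1`, or `0 < a ≤ 1` and `b` is odd. -/
theorem stmt4 (b : ℕ) (hb : 0 < b) (a : ℝ) (ha : 0 < a) :
    ((∀ T : ℝ, 0 < T →
        IntegrableOn (fun x : ℝ => Real.sin x ^ b / x ^ a) (Set.Ioc 0 T)) ∧
      ∃ L : ℝ,
        Tendsto (fun T : ℝ => ∫ x in Set.Ioc 0 T, Real.sin x ^ b / x ^ a)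
          atTop (𝓝 L)) ↔
    ((1 < a ∧ a < (b : ℝ) + 1) ∨ (a ≤ 1 ∧ Odd b)) := by
  have hfeq : (fun x : ℝ => Real.sin x ^ b / x ^ a) = Stmt4Aux.f b a := rfl
  rw [hfeq]
  constructor
  · rintro ⟨hint, hlim⟩
    by_contra hcon
    push_neg at hcon
    obtain ⟨h1, h2⟩ := hcon
    rcases le_or_gt ((b:ℝ)+1) a with hge | hlt
    · exact Stmt4Aux.not_integrableOn_f b hge (hint 1 one_pos)
    · have ha1 : a ≤ 1 := by
        by_contra h
        push_neg at h
        linarith [h1 h]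
      have hbe : Even b := Nat.not_odd_iff_even.mp (h2 ha1)
      exact Stmt4Aux.even_diverges b hb hbe ha ha1 hint hlim
  · rintro (⟨h1, h2⟩ | ⟨h1, h2⟩)
    · exact ⟨fun T _ => Stmt4Aux.integrableOn_f b ha h2 T, Stmt4Aux.tendsto_big b h1 h2⟩
    · have hab : a < (b:ℝ) + 1 := by
        have hb1 : (1:ℝ) ≤ (b:ℝ) := by exact_mod_cast hb
        linarith
      exact ⟨fun T _ => Stmt4Aux.integrableOn_f b ha hab T, Stmt4Aux.tendsto_odd b h2 ha h1⟩
end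

section
/- For all positive real numbers α and β, the improper integral ∫₀^∞ (cos(α x) − cos(β x)) / x dx converges and equals ln(β/α); that is, the integrand is Lebesgue integrable on (0,T] for every T > 0 and ∫_{(0,T]} (cos(α x) − cos(β x))/x dx → ln(β/α) as T → ∞. -/
open Real MeasureTheory Set Filter Topology

/-- Lipschitz bound for cosine. -/
lemma my_cos_lip (a b : ℝ) : |Real.cos a - Real.cos b| ≤ |a - b| := by
  rw [Real.cos_sub_cos]
  have h1 : |Real.sin ((a + b) / 2)| ≤ 1 := Real.abs_sin_le_one _
  have h2 : |Real.sin ((a - b) / 2)| ≤ |(a - b) / 2| := Real.abs_sin_le_abs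
  calc |(-2) * Real.sin ((a + b) / 2) * Real.sin ((a - b) / 2)|
      = 2 * |Real.sin ((a + b) / 2)| * |Real.sin ((a - b) / 2)| := by
        rw [abs_mul, abs_mul]; norm_num
    _ ≤ 2 * 1 * |(a - b) / 2| := by
        apply mul_le_mul (by nlinarith [abs_nonneg (Real.sin ((a+b)/2))]) h2 (abs_nonneg _)
        positivity
    _ = |a - b| := by rw [abs_div, abs_two]; ring

noncomputable def gg (u : ℝ) : ℝ := (Real.cos u - 1) / u

lemma gg_bound (u : ℝ) : ‖gg u‖ ≤ 1 := by
  rcases eq_or_ne u 0 with h | h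
  · simp [gg, h]
  · have := my_cos_lip u 0
    simp only [Real.cos_zero, sub_zero] at this
    rw [gg, Real.norm_eq_abs, abs_div]
    rw [div_le_one (abs_pos.2 h)]
    exact this

lemma gg_meas : Measurable gg := by
  unfold gg
  fun_prop

lemma gg_intervalIntegrable {s : ℝ} (hs : 0 ≤ s) : IntervalIntegrable gg volume 0 s := by
  rw [intervalIntegrable_iff_integrableOn_Ioc_of_le hs]
  apply Integrable.mono' (g := fun _ => (1 : ℝ))
  · exact integrableOn_const measure_Ioc_lt_top.ne
  · exact gg_meas.aestronglyMeasurable.restrict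
  · exact Filter.Eventually.of_forall fun x => gg_bound x

/-- The key formula: for `T > 0`,
`∫_{(0,T]} (cos αx - cos βx)/x dx = log (β/α) - ∫_{αT}^{βT} cos u / u du`. -/
lemma key_formula (α β : ℝ) (hα : 0 < α) (hβ : 0 < β) (T : ℝ) (hT : 0 < T) :
    (∫ x in Set.Ioc 0 T, (Real.cos (α * x) - Real.cos (β * x)) / x)
      = Real.log (β / α) - ∫ u in (α * T)..(β * T), Real.cos u * u⁻¹ := by
  have hfun : (fun x : ℝ => (Real.cos (α * x) - Real.cos (β * x)) / x)
      = fun x => α * gg (α * x) - β * gg (β * x) := by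
    funext x
    rcases eq_or_ne x 0 with h | h
    · simp [gg, h]
    · unfold gg
      field_simp
      ring
  have hIa : IntervalIntegrable (fun x => gg (α * x)) volume 0 T := by
    have := (gg_intervalIntegrable (s := α * T) (by positivity)).comp_mul_left (c := α) enorm_ne_top enorm_ne_top
    simpa [ne_of_gt hα] using this
  have hIb : IntervalIntegrable (fun x => gg (β * x)) volume 0 T := by
    have := (gg_intervalIntegrable (s := β * T) (by positivity)).comp_mul_left (c := β) enorm_ne_top enorm_ne_top
    simpa [ne_of_gt hβ] using this
  rw [← intervalIntegral.integral_of_le hT.le, hfun]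
  rw [intervalIntegral.integral_sub (hIa.const_mul α) (hIb.const_mul β)]
  rw [intervalIntegral.integral_const_mul, intervalIntegral.integral_const_mul]
  have e1 : α * ∫ x in (0:ℝ)..T, gg (α * x) = ∫ u in (0:ℝ)..(α * T), gg u := by
    have := intervalIntegral.smul_integral_comp_mul_left gg (a := 0) (b := T) α
    simpa [smul_eq_mul] using this
  have e2 : β * ∫ x in (0:ℝ)..T, gg (β * x) = ∫ u in (0:ℝ)..(β * T), gg u := by
    have := intervalIntegral.smul_integral_comp_mul_left gg (a := 0) (b := T) β
    simpa [smul_eq_mul] using this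
  rw [e1, e2]
  rw [intervalIntegral.integral_interval_sub_left
    (gg_intervalIntegrable (by positivity)) (gg_intervalIntegrable (by positivity))]
  -- now : ∫ u in (β*T)..(α*T), gg u = log (β/α) - ∫ u in αT..βT, cos u * u⁻¹
  have hsub : Set.uIcc (α * T) (β * T) ⊆ {x : ℝ | x ≠ 0} := by
    intro x hx
    have h1 : min (α * T) (β * T) ≤ x := hx.1
    have : (0:ℝ) < min (α * T) (β * T) := lt_min (by positivity) (by positivity)
    exact ne_of_gt (lt_of_lt_of_le this h1)
  have hint1 : IntervalIntegrable (fun u : ℝ => u⁻¹) volume (α * T) (β * T) :=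
    (ContinuousOn.inv₀ continuousOn_id (fun x hx => hsub hx)).intervalIntegrable
  have hint2 : IntervalIntegrable (fun u : ℝ => Real.cos u * u⁻¹) volume (α * T) (β * T) :=
    (Real.continuous_cos.continuousOn.mul
      (ContinuousOn.inv₀ continuousOn_id (fun x hx => hsub hx))).intervalIntegrable
  have hcong : ∫ u in (β * T)..(α * T), gg u
      = ∫ u in (α * T)..(β * T), (u⁻¹ - Real.cos u * u⁻¹) := by
    rw [intervalIntegral.integral_symm (α * T) (β * T), ← intervalIntegral.integral_neg]
    apply intervalIntegral.integral_congr
    intro u hu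
    have hu0 : u ≠ 0 := hsub hu
    unfold gg
    field_simp
    ring
  rw [hcong, intervalIntegral.integral_sub hint1 hint2]
  rw [integral_inv_of_pos (by positivity) (by positivity)]
  have : (β * T) / (α * T) = β / α := by
    rw [mul_comm β T, mul_comm α T, mul_div_mul_left _ _ (ne_of_gt hT)]
  rw [this]

/-- The tail integral tends to zero, case `α ≤ β`. -/
lemma tail_zero_le (α β : ℝ) (hα : 0 < α) (hβ : 0 < β) (hab : α ≤ β) :
    Tendsto (fun T : ℝ => ∫ u in (α * T)..(β * T), Real.cos u * u⁻¹) atTop (𝓝 0) := by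
  apply squeeze_zero_norm' (a := fun T => 3 / (α * T))
  · filter_upwards [eventually_gt_atTop 0] with T hT
    set a := α * T with ha'
    set b := β * T with hb'
    have ha : 0 < a := by positivity
    have hb : 0 < b := by positivity
    have hab2 : a ≤ b := by
      apply mul_le_mul_of_nonneg_right hab hT.le
    have hsub : Set.uIcc a b ⊆ {x : ℝ | x ≠ 0} := by
      intro x hx
      have h1 : min a b ≤ x := hx.1
      have : (0:ℝ) < min a b := lt_min ha hb
      exact ne_of_gt (lt_of_lt_of_le this h1)
    have hu' : IntervalIntegrable (fun x : ℝ => -((x ^ 2)⁻¹)) volume a b := by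
      apply ContinuousOn.intervalIntegrable
      exact ((continuousOn_pow 2).inv₀ (fun x hx => pow_ne_zero 2 (hsub hx))).neg
    have hv' : IntervalIntegrable Real.cos volume a b :=
      Real.continuous_cos.intervalIntegrable a b
    have parts := intervalIntegral.integral_mul_deriv_eq_deriv_mul
      (u := fun x : ℝ => x⁻¹) (v := Real.sin)
      (u' := fun x : ℝ => -((x ^ 2)⁻¹)) (v' := Real.cos)
      (fun x hx => hasDerivAt_inv (hsub hx))
      (fun x hx => Real.hasDerivAt_sin x) hu' hv'
    have hI : (∫ u in a..b, Real.cos u * u⁻¹) = ∫ u in a..b, u⁻¹ * Real.cos u := by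
      apply intervalIntegral.integral_congr; intro u _; ring
    rw [hI, parts]
    -- bound the boundary terms and the remaining integral
    have hK : ‖∫ x in a..b, -((x ^ 2)⁻¹) * Real.sin x‖ ≤ a⁻¹ := by
      calc ‖∫ x in a..b, -((x ^ 2)⁻¹) * Real.sin x‖
          ≤ ∫ x in a..b, ‖-((x ^ 2)⁻¹) * Real.sin x‖ :=
            intervalIntegral.norm_integral_le_integral_norm hab2
        _ ≤ ∫ x in a..b, (x ^ 2)⁻¹ := by
            apply intervalIntegral.integral_mono_on hab2
            · exact (ContinuousOn.intervalIntegrable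
                ((((continuousOn_pow 2).inv₀ (fun x hx => pow_ne_zero 2 (hsub hx))).neg.mul
                  Real.continuous_sin.continuousOn).norm))
            · exact ContinuousOn.intervalIntegrable
                ((continuousOn_pow 2).inv₀ (fun x hx => pow_ne_zero 2 (hsub hx)))
            · intro x hx
              rw [norm_mul, norm_neg, norm_inv]
              have : ‖Real.sin x‖ ≤ 1 := by
                rw [Real.norm_eq_abs]; exact Real.abs_sin_le_one x
              calc ‖(x:ℝ) ^ 2‖⁻¹ * ‖Real.sin x‖ ≤ ‖(x:ℝ) ^ 2‖⁻¹ * 1 := by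
                    apply mul_le_mul_of_nonneg_left this (by positivity)
                _ = (x ^ 2)⁻¹ := by
                    rw [mul_one, Real.norm_eq_abs, abs_of_nonneg (sq_nonneg x)]
        _ = a⁻¹ - b⁻¹ := by
            rw [intervalIntegral.integral_eq_sub_of_hasDerivAt
              (f := fun x : ℝ => -(x⁻¹)) (f' := fun x : ℝ => (x ^ 2)⁻¹)
              (fun x hx => by have h := (hasDerivAt_inv (hsub hx)).neg; rw [neg_neg] at h; exact h)
              (ContinuousOn.intervalIntegrable
                ((continuousOn_pow 2).inv₀ (fun x hx => pow_ne_zero 2 (hsub hx))))]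
            ring
        _ ≤ a⁻¹ := by
            have : (0:ℝ) < b⁻¹ := by positivity
            linarith
    have h1 : ‖b⁻¹ * Real.sin b‖ ≤ a⁻¹ := by
      rw [norm_mul, Real.norm_eq_abs b⁻¹, abs_of_pos (by positivity : (0:ℝ) < b⁻¹)]
      calc b⁻¹ * ‖Real.sin b‖ ≤ b⁻¹ * 1 := by
            apply mul_le_mul_of_nonneg_left _ (by positivity)
            rw [Real.norm_eq_abs]; exact Real.abs_sin_le_one b
        _ ≤ a⁻¹ := by rw [mul_one]; exact inv_anti₀ ha hab2
    have h2 : ‖a⁻¹ * Real.sin a‖ ≤ a⁻¹ := by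
      rw [norm_mul, Real.norm_eq_abs a⁻¹, abs_of_pos (by positivity : (0:ℝ) < a⁻¹)]
      calc a⁻¹ * ‖Real.sin a‖ ≤ a⁻¹ * 1 := by
            apply mul_le_mul_of_nonneg_left _ (by positivity)
            rw [Real.norm_eq_abs]; exact Real.abs_sin_le_one a
        _ = a⁻¹ := mul_one _
    calc ‖b⁻¹ * Real.sin b - a⁻¹ * Real.sin a - ∫ x in a..b, -((x ^ 2)⁻¹) * Real.sin x‖
        ≤ ‖b⁻¹ * Real.sin b - a⁻¹ * Real.sin a‖ + ‖∫ x in a..b, -((x ^ 2)⁻¹) * Real.sin x‖ :=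
          norm_sub_le _ _
      _ ≤ (‖b⁻¹ * Real.sin b‖ + ‖a⁻¹ * Real.sin a‖) + a⁻¹ :=
          add_le_add (norm_sub_le _ _) hK
      _ ≤ (a⁻¹ + a⁻¹) + a⁻¹ := by linarith
      _ = 3 / (α * T) := by rw [← ha']; field_simp; ring
  · apply Tendsto.div_atTop (tendsto_const_nhds)
    exact (tendsto_id.const_mul_atTop hα)

/-- The tail integral tends to zero, general case. -/
lemma tail_zero (α β : ℝ) (hα : 0 < α) (hβ : 0 < β) :
    Tendsto (fun T : ℝ => ∫ u in (α * T)..(β * T), Real.cos u * u⁻¹) atTop (𝓝 0) := by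
  rcases le_total α β with h | h
  · exact tail_zero_le α β hα hβ h
  · have := (tail_zero_le β α hβ hα h).neg
    rw [neg_zero] at this
    apply this.congr
    intro T
    rw [← intervalIntegral.integral_symm]

/-- For positive reals `α`, `β`, the improper integral
`∫₀^∞ (cos (α x) - cos (β x)) / x dx` converges and equals `ln (β / α)`. -/
theorem stmt8 (α β : ℝ) (hα : 0 < α) (hβ : 0 < β) :
    (∀ T : ℝ, 0 < T →
      IntegrableOn (fun x : ℝ => (Real.cos (α * x) - Real.cos (β * x)) / x)
        (Set.Ioc 0 T)) ∧
    Tendsto (fun T : ℝ => ∫ x in Set.Ioc 0 T, (Real.cos (α * x) - Real.cos (β * x)) / x)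
      atTop (𝓝 (Real.log (β / α))) := by
  constructor
  · intro T hT
    apply Integrable.mono' (g := fun _ => |α - β|)
    · exact integrableOn_const measure_Ioc_lt_top.ne
    · apply Measurable.aestronglyMeasurable
      fun_prop
    · filter_upwards [ae_restrict_mem measurableSet_Ioc] with x hx
      have hx0 : 0 < x := hx.1
      rw [Real.norm_eq_abs, abs_div]
      rw [div_le_iff₀ (abs_pos.2 (ne_of_gt hx0))]
      calc |Real.cos (α * x) - Real.cos (β * x)| ≤ |α * x - β * x| := my_cos_lip _ _
        _ = |α - β| * |x| := by rw [← sub_mul, abs_mul]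
  · have h1 : Tendsto (fun T : ℝ => Real.log (β / α)
        - ∫ u in (α * T)..(β * T), Real.cos u * u⁻¹) atTop (𝓝 (Real.log (β / α) - 0)) :=
      tendsto_const_nhds.sub (tail_zero α β hα hβ)
    rw [sub_zero] at h1
    apply h1.congr'
    filter_upwards [eventually_gt_atTop 0] with T hT
    exact (key_formula α β hα hβ T hT).symm
end

section
/- Let k be a positive real number and n a real number with 0 < n < 2. Then the improper integral ∫₀^∞ sin(k x) / x^n dx converges and equals (π/2) · k^(n−1) / (Γ(n) · sin(n π / 2)); that is, the integrand is Lebesgue integrable on (0,T] for every T > 0 and ∫_{(0,T]} sin(k x)/x^n dx → (π/2) · k^(n−1) / (Γ(n) · sin(n π / 2)) as T → ∞. -/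
open Real MeasureTheory Set Filter Topology


-- A1
lemma aux_int {a r : ℝ} (ha : 0 < a) (hr : 0 < r) :
    IntegrableOn (fun t : ℝ => t ^ (a - 1) * Real.exp (-(r * t))) (Ioi 0) := by
  have := integrableOn_rpow_mul_exp_neg_mul_rpow (p := 1) (s := a - 1) (b := r)
    (by linarith) one_pos hr
  simpa [Real.rpow_one, neg_mul] using this

-- D: FTC
lemma aux_ftc' {k t : ℝ} (hk : 0 < k) (T : ℝ) :
    ∫ x in (0:ℝ)..T, Real.sin (k * x) * Real.exp (-(t * x)) =
      (k - Real.exp (-(t * T)) * (t * Real.sin (k * T) + k * Real.cos (k * T))) / (k ^ 2 + t ^ 2) := by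
  have hk2 : k ^ 2 + t ^ 2 ≠ 0 := by positivity
  have key : ∀ x : ℝ, HasDerivAt
      (fun x => -(Real.exp (-(t * x)) * (t * Real.sin (k * x) + k * Real.cos (k * x))) / (k ^ 2 + t ^ 2))
      (Real.sin (k * x) * Real.exp (-(t * x))) x := by
    intro x
    have h1 : HasDerivAt (fun x : ℝ => Real.exp (-(t * x))) (-t * Real.exp (-(t * x))) x := by
      have := (Real.hasDerivAt_exp (-(t * x))).comp x (((hasDerivAt_id x).const_mul t).neg)
      simpa [mul_comm, Function.comp_def] using this
    have h2 : HasDerivAt (fun x : ℝ => t * Real.sin (k * x) + k * Real.cos (k * x))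
        (t * (k * Real.cos (k * x)) + k * (-(k * Real.sin (k * x)))) x := by
      have hs : HasDerivAt (fun x : ℝ => Real.sin (k * x)) (Real.cos (k * x) * k) x := by
        simpa [Function.comp_def] using (Real.hasDerivAt_sin (k * x)).comp x ((hasDerivAt_id x).const_mul k)
      have hc : HasDerivAt (fun x : ℝ => Real.cos (k * x)) (-Real.sin (k * x) * k) x := by
        simpa [Function.comp_def] using (Real.hasDerivAt_cos (k * x)).comp x ((hasDerivAt_id x).const_mul k)
      have := ((hs.const_mul t).add (hc.const_mul k))
      exact this.congr_deriv (by ring)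
    have := ((h1.mul h2).neg).div_const (k ^ 2 + t ^ 2)
    exact this.congr_deriv (by rw [div_eq_iff hk2]; ring)
  rw [intervalIntegral.integral_eq_sub_of_hasDerivAt (fun x _ => key x)
    (Continuous.intervalIntegrable (by continuity) _ _)]
  simp [Real.sin_zero, Real.cos_zero]
  ring


lemma integral_exp_neg_mul_Ioi' {r : ℝ} (hr : 0 < r) :
    ∫ s in Ioi (0:ℝ), Real.exp (-(r * s)) = 1 / r := by
  have := integral_rpow_mul_exp_neg_mul_Ioi (a := 1) one_pos hr
  simpa [Real.rpow_one, Real.Gamma_one] using this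

lemma beta_ioi {a : ℝ} (ha0 : 0 < a) (ha1 : a < 1) :
    ∫ u in Ioi (0:ℝ), u ^ (a - 1) / (1 + u) = Real.Gamma a * Real.Gamma (1 - a) := by
  have ha1' : 0 < 1 - a := by linarith
  set f : ℝ → ℝ → ℝ := fun s u => Real.exp (-s) * (u ^ (a - 1) * Real.exp (-(s * u))) with hf
  have hmeas : AEStronglyMeasurable (fun p : ℝ × ℝ => f p.1 p.2)
      ((volume.restrict (Ioi (0:ℝ))).prod (volume.restrict (Ioi (0:ℝ)))) := by
    apply Measurable.aestronglyMeasurable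
    fun_prop
  have hcong : ∀ s ∈ Ioi (0:ℝ),
      (∫ u in Ioi (0:ℝ), ‖f s u‖) = Real.Gamma a * (s ^ ((1 - a) - 1) * Real.exp (-(1 * s))) := by
    intro s hs
    have h1 : ∀ u ∈ Ioi (0:ℝ), ‖f s u‖ = Real.exp (-s) * (u ^ (a - 1) * Real.exp (-(s * u))) := by
      intro u hu
      rw [Real.norm_eq_abs, abs_of_nonneg]
      exact mul_nonneg (Real.exp_nonneg _)
        (mul_nonneg (Real.rpow_nonneg (le_of_lt hu) _) (Real.exp_nonneg _))
    rw [setIntegral_congr_fun measurableSet_Ioi h1, integral_const_mul,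
      integral_rpow_mul_exp_neg_mul_Ioi ha0 hs]
    rw [one_div, Real.inv_rpow (le_of_lt hs), ← Real.rpow_neg (le_of_lt hs),
      show (-a : ℝ) = 1 - a - 1 by ring, one_mul]
    ring
  have hint : Integrable (fun p : ℝ × ℝ => f p.1 p.2)
      ((volume.restrict (Ioi (0:ℝ))).prod (volume.restrict (Ioi (0:ℝ)))) := by
    rw [MeasureTheory.integrable_prod_iff hmeas]
    refine ⟨?_, ?_⟩
    · filter_upwards [ae_restrict_mem measurableSet_Ioi] with s hs
      exact ((aux_int ha0 hs).const_mul _)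
    · exact IntegrableOn.congr_fun ((aux_int ha1' one_pos).const_mul (Real.Gamma a))
        (fun s hs => (hcong s hs).symm) measurableSet_Ioi
  have hswap := MeasureTheory.integral_integral_swap
    (f := f) (μ := volume.restrict (Ioi (0:ℝ))) (ν := volume.restrict (Ioi (0:ℝ))) hint
  -- LHS of swap: ∫ s ∫ u f = Γ a * Γ (1 - a)
  have hL : (∫ s in Ioi (0:ℝ), ∫ u in Ioi (0:ℝ), f s u) = Real.Gamma a * Real.Gamma (1 - a) := by
    have h1 : ∀ s ∈ Ioi (0:ℝ),
        (∫ u in Ioi (0:ℝ), f s u) = Real.Gamma a * (s ^ ((1 - a) - 1) * Real.exp (-(1 * s))) := by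
      intro s hs
      have := hcong s hs
      rw [← this]
      refine setIntegral_congr_fun measurableSet_Ioi (fun u hu => ?_)
      rw [Real.norm_eq_abs, abs_of_nonneg]
      exact mul_nonneg (Real.exp_nonneg _)
        (mul_nonneg (Real.rpow_nonneg (le_of_lt hu) _) (Real.exp_nonneg _))
    rw [setIntegral_congr_fun measurableSet_Ioi h1, integral_const_mul,
      integral_rpow_mul_exp_neg_mul_Ioi ha1' one_pos]
    simp
  -- RHS of swap: ∫ u ∫ s f = target integral
  have hR : (∫ u in Ioi (0:ℝ), ∫ s in Ioi (0:ℝ), f s u)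
      = ∫ u in Ioi (0:ℝ), u ^ (a - 1) / (1 + u) := by
    refine setIntegral_congr_fun measurableSet_Ioi (fun u hu => ?_)
    have h2 : ∀ s : ℝ, f s u = u ^ (a - 1) * Real.exp (-((1 + u) * s)) := by
      intro s
      have : f s u = u ^ (a - 1) * (Real.exp (-s) * Real.exp (-(s * u))) := by
        simp only [hf]; ring
      rw [this, ← Real.exp_add, show -s + -(s * u) = -((1 + u) * s) by ring]
    simp only [h2]
    rw [integral_const_mul, integral_exp_neg_mul_Ioi' (by linarith [mem_Ioi.mp hu])]
    ring
  rw [← hR, ← hswap, hL]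


lemma sin_half_pos' {n : ℝ} (hn0 : 0 < n) (hn2 : n < 2) : 0 < Real.sin (n * π / 2) := by
  apply Real.sin_pos_of_pos_of_lt_pi
  · positivity
  · nlinarith [Real.pi_pos]

lemma mellin_one_add_sq' {n : ℝ} (hn0 : 0 < n) (hn2 : n < 2) :
    ∫ u in Ioi (0:ℝ), u ^ (n - 1) / (1 + u ^ (2:ℕ)) = π / (2 * Real.sin (n * π / 2)) := by
  have h0 : (0:ℝ) < n / 2 := by linarith
  have h1 : n / 2 < 1 := by linarith
  have key := integral_comp_rpow_Ioi_of_pos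
    (g := fun y : ℝ => y ^ (n / 2 - 1) / (1 + y)) (p := (2:ℝ)) two_pos
  rw [beta_ioi h0 h1] at key
  have hL : ∀ x ∈ Ioi (0:ℝ),
      ((2:ℝ) * x ^ ((2:ℝ) - 1)) • ((x ^ (2:ℝ)) ^ (n / 2 - 1) / (1 + x ^ (2:ℝ)))
        = 2 * (x ^ (n - 1) / (1 + x ^ (2:ℕ))) := by
    intro x hx
    have hx0 : (0:ℝ) < x := mem_Ioi.mp hx
    have e1 : x ^ (2:ℝ) = x ^ (2:ℕ) := by
      rw [show (2:ℝ) = ((2:ℕ):ℝ) by norm_num, Real.rpow_natCast]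
    have e2 : (x ^ (2:ℝ)) ^ (n / 2 - 1) = x ^ (n - 2) := by
      rw [← Real.rpow_mul hx0.le, show (2:ℝ) * (n / 2 - 1) = n - 2 by ring]
    have e3 : x * x ^ (n - 2) = x ^ (n - 1) := by
      rw [show n - 1 = 1 + (n - 2) by ring, Real.rpow_add hx0, Real.rpow_one]
    rw [smul_eq_mul, e2, e1, show ((2:ℝ) - 1) = (1:ℝ) by norm_num, Real.rpow_one,
      ← e3]
    ring
  rw [setIntegral_congr_fun measurableSet_Ioi hL, integral_const_mul] at key
  have hrefl : Real.Gamma (n / 2) * Real.Gamma (1 - n / 2) = π / Real.sin (π * (n / 2)) :=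
    Real.Gamma_mul_Gamma_one_sub _
  rw [hrefl] at key
  have hs : Real.sin (π * (n / 2)) = Real.sin (n * π / 2) := by ring_nf
  rw [hs] at key
  have hsne : Real.sin (n * π / 2) ≠ 0 := (sin_half_pos' hn0 hn2).ne'
  field_simp at key ⊢
  linarith


lemma int_main {k n : ℝ} (hk : 0 < k) (hn0 : 0 < n) (hn2 : n < 2) {T : ℝ} (hT : 0 < T) :
    IntegrableOn (fun x : ℝ => Real.sin (k * x) / x ^ n) (Ioc 0 T) := by
  have hmaj : IntegrableOn (fun x : ℝ => k * x ^ (1 - n)) (Ioc 0 T) := by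
    refine Integrable.const_mul ?_ k
    exact (intervalIntegrable_iff_integrableOn_Ioc_of_le hT.le).mp
      (intervalIntegral.intervalIntegrable_rpow' (by linarith))
  refine Integrable.mono' hmaj ?_ ?_
  · apply Measurable.aestronglyMeasurable; fun_prop
  · filter_upwards [ae_restrict_mem measurableSet_Ioc] with x hx
    have hx0 : 0 < x := hx.1
    have hxn : 0 < x ^ n := Real.rpow_pos_of_pos hx0 n
    rw [Real.norm_eq_abs, abs_div, abs_of_pos hxn, div_le_iff₀ hxn]
    have h1 : |Real.sin (k * x)| ≤ k * x :=
      le_trans Real.abs_sin_le_abs (le_of_eq (abs_of_pos (by positivity)))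
    calc |Real.sin (k * x)| ≤ k * x := h1
      _ = k * x ^ (1 - n) * x ^ n := by
          rw [mul_assoc, ← Real.rpow_add hx0]; norm_num

lemma int_P1 {k n : ℝ} (hk : 0 < k) (hn0 : 0 < n) (hn2 : n < 2) :
    IntegrableOn (fun t : ℝ => t ^ (n - 1) * (k / (k ^ 2 + t ^ 2))) (Ioi 0) := by
  have h1 : IntegrableOn (fun t : ℝ => t ^ (n - 1) * (k / (k ^ 2 + t ^ 2))) (Ioc 0 1) := by
    have hmaj : IntegrableOn (fun t : ℝ => (1 / k) * t ^ (n - 1)) (Ioc 0 1) :=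
      Integrable.const_mul ((intervalIntegrable_iff_integrableOn_Ioc_of_le one_pos.le).mp
        (intervalIntegral.intervalIntegrable_rpow' (by linarith))) _
    refine Integrable.mono' hmaj ?_ ?_
    · apply Measurable.aestronglyMeasurable; fun_prop
    · filter_upwards [ae_restrict_mem measurableSet_Ioc] with t ht
      have ht0 : 0 < t := ht.1
      have htn : 0 ≤ t ^ (n - 1) := Real.rpow_nonneg ht0.le _
      rw [Real.norm_eq_abs, abs_of_nonneg (by positivity)]
      rw [mul_comm (1 / k)]
      apply mul_le_mul_of_nonneg_left _ htn
      rw [div_le_div_iff₀ (by positivity) hk]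
      nlinarith [sq_nonneg t]
  have h2 : IntegrableOn (fun t : ℝ => t ^ (n - 1) * (k / (k ^ 2 + t ^ 2))) (Ioi 1) := by
    have hmaj : IntegrableOn (fun t : ℝ => k * t ^ (n - 3)) (Ioi 1) :=
      (integrableOn_Ioi_rpow_of_lt (by linarith) one_pos).const_mul k
    refine Integrable.mono' hmaj ?_ ?_
    · apply Measurable.aestronglyMeasurable; fun_prop
    · filter_upwards [ae_restrict_mem measurableSet_Ioi] with t ht
      have ht1 : (1:ℝ) < t := ht
      have ht0 : 0 < t := lt_trans one_pos ht1
      rw [Real.norm_eq_abs, abs_of_nonneg (by positivity)]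
      have e2 : t ^ (n - 1) = t ^ (n - 3) * t ^ (2:ℕ) := by
        rw [← Real.rpow_natCast t 2, ← Real.rpow_add ht0]
        norm_num
        ring_nf
      rw [e2, mul_assoc, mul_comm k]
      apply mul_le_mul_of_nonneg_left _ (Real.rpow_nonneg ht0.le _)
      rw [mul_div_assoc', div_le_iff₀ (by positivity)]
      nlinarith [Real.rpow_nonneg ht0.le (2:ℝ), sq_nonneg t, sq_nonneg k]
  rw [← Ioc_union_Ioi_eq_Ioi (zero_le_one)]
  exact h1.union h2

lemma P1_value' {k n : ℝ} (hk : 0 < k) (hn0 : 0 < n) (hn2 : n < 2) :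
    ∫ t in Ioi (0:ℝ), t ^ (n - 1) * (k / (k ^ 2 + t ^ 2))
      = k ^ (n - 1) * (π / (2 * Real.sin (n * π / 2))) := by
  have key := integral_comp_mul_left_Ioi
    (fun t : ℝ => t ^ (n - 1) * (k / (k ^ 2 + t ^ 2))) 0 hk
  rw [mul_zero] at key
  have hptw : ∀ x ∈ Ioi (0:ℝ),
      (k * x) ^ (n - 1) * (k / (k ^ 2 + (k * x) ^ 2))
        = k ^ (n - 2) * (x ^ (n - 1) / (1 + x ^ (2:ℕ))) := by
    intro x hx
    have hx0 : 0 < x := mem_Ioi.mp hx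
    rw [Real.mul_rpow hk.le hx0.le]
    have e1 : k ^ 2 + (k * x) ^ 2 = k ^ 2 * (1 + x ^ 2) := by ring
    have e2 : k ^ (n - 2) = k ^ (n - 1) * k⁻¹ := by
      rw [← Real.rpow_neg_one k, ← Real.rpow_add hk]
      ring_nf
    rw [e1, e2]
    have hk2 : (k:ℝ) ^ 2 ≠ 0 := by positivity
    have hx2 : (1:ℝ) + x ^ 2 ≠ 0 := by positivity
    field_simp
  rw [setIntegral_congr_fun measurableSet_Ioi hptw, integral_const_mul,
    mellin_one_add_sq' hn0 hn2] at key
  rw [smul_eq_mul] at key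
  have hI : (∫ t in Ioi (0:ℝ), t ^ (n - 1) * (k / (k ^ 2 + t ^ 2)))
      = k * (k ^ (n - 2) * (π / (2 * Real.sin (n * π / 2)))) := by
    rw [key, ← mul_assoc, mul_inv_cancel₀ hk.ne', one_mul]
  have e4 : k * k ^ (n - 2) = k ^ (n - 1) := by
    rw [show n - 1 = 1 + (n - 2) by ring, Real.rpow_add hk, Real.rpow_one]
  rw [hI, ← mul_assoc, e4]

lemma err_le {k n T : ℝ} (hk : 0 < k) {t : ℝ} (ht : 0 < t) :
    ‖t ^ (n - 1) * ((Real.exp (-(t * T)) * (t * Real.sin (k * T) + k * Real.cos (k * T)))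
      / (k ^ 2 + t ^ 2))‖ ≤ (3 / (2 * k)) * (t ^ (n - 1) * Real.exp (-(T * t))) := by
  have htn : 0 ≤ t ^ (n - 1) := Real.rpow_nonneg ht.le _
  have hd : (0:ℝ) < k ^ 2 + t ^ 2 := by positivity
  rw [Real.norm_eq_abs, abs_mul, abs_of_nonneg htn, abs_div, abs_of_pos hd, abs_mul,
    abs_of_nonneg (Real.exp_nonneg _)]
  have h1 : |t * Real.sin (k * T) + k * Real.cos (k * T)| ≤ t + k := by
    calc |t * Real.sin (k * T) + k * Real.cos (k * T)|
        ≤ |t * Real.sin (k * T)| + |k * Real.cos (k * T)| := abs_add_le _ _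
      _ ≤ t * 1 + k * 1 := by
          rw [abs_mul, abs_mul, abs_of_pos ht, abs_of_pos hk]
          exact add_le_add (mul_le_mul_of_nonneg_left (Real.abs_sin_le_one _) ht.le)
            (mul_le_mul_of_nonneg_left (Real.abs_cos_le_one _) hk.le)
      _ = t + k := by ring
  have h2 : (t + k) / (k ^ 2 + t ^ 2) ≤ 3 / (2 * k) := by
    rw [div_le_div_iff₀ hd (by positivity)]
    nlinarith [sq_nonneg (t - k), sq_nonneg t, sq_nonneg k]
  calc t ^ (n - 1) * (Real.exp (-(t * T)) * |t * Real.sin (k * T) + k * Real.cos (k * T)|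
        / (k ^ 2 + t ^ 2))
      ≤ t ^ (n - 1) * (Real.exp (-(t * T)) * (t + k) / (k ^ 2 + t ^ 2)) := by
        gcongr
      _ ≤ (3 / (2 * k)) * (t ^ (n - 1) * Real.exp (-(T * t))) := by
        rw [mul_comm t T]
        have := mul_le_mul_of_nonneg_left h2 (Real.exp_nonneg (-(T * t)))
        calc t ^ (n - 1) * (Real.exp (-(T * t)) * (t + k) / (k ^ 2 + t ^ 2))
            = t ^ (n - 1) * (Real.exp (-(T * t)) * ((t + k) / (k ^ 2 + t ^ 2))) := by ring
          _ ≤ t ^ (n - 1) * (Real.exp (-(T * t)) * (3 / (2 * k))) := by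
              apply mul_le_mul_of_nonneg_left _ htn
              exact mul_le_mul_of_nonneg_left h2 (Real.exp_nonneg _)
          _ = (3 / (2 * k)) * (t ^ (n - 1) * Real.exp (-(T * t))) := by ring

lemma err_int {k n T : ℝ} (hk : 0 < k) (hn0 : 0 < n) (hT : 0 < T) :
    IntegrableOn (fun t : ℝ => t ^ (n - 1) *
      ((Real.exp (-(t * T)) * (t * Real.sin (k * T) + k * Real.cos (k * T)))
        / (k ^ 2 + t ^ 2))) (Ioi 0) := by
  refine Integrable.mono' (((aux_int hn0 hT)).const_mul (3 / (2 * k))) ?_ ?_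
  · apply Measurable.aestronglyMeasurable; fun_prop
  · filter_upwards [ae_restrict_mem measurableSet_Ioi] with t ht
    exact err_le hk (mem_Ioi.mp ht)

lemma err_norm {k n T : ℝ} (hk : 0 < k) (hn0 : 0 < n) (hT : 0 < T) :
    ‖∫ t in Ioi (0:ℝ), t ^ (n - 1) *
      ((Real.exp (-(t * T)) * (t * Real.sin (k * T) + k * Real.cos (k * T)))
        / (k ^ 2 + t ^ 2))‖ ≤ (3 / (2 * k)) * ((1 / T) ^ n * Real.Gamma n) := by
  have h := MeasureTheory.norm_integral_le_of_norm_le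
    (((aux_int hn0 hT)).const_mul (3 / (2 * k)))
    (by filter_upwards [ae_restrict_mem measurableSet_Ioi] with t ht
        exact err_le hk (mem_Ioi.mp ht))
  rw [integral_const_mul, integral_rpow_mul_exp_neg_mul_Ioi hn0 hT] at h
  exact h

lemma fubini_step {k n : ℝ} (hk : 0 < k) (hn0 : 0 < n) (hn2 : n < 2) {T : ℝ} (hT : 0 < T) :
    Real.Gamma n * ∫ x in Ioc (0:ℝ) T, Real.sin (k * x) / x ^ n
      = ∫ t in Ioi (0:ℝ), t ^ (n - 1) *
          ((k - Real.exp (-(t * T)) * (t * Real.sin (k * T) + k * Real.cos (k * T)))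
            / (k ^ 2 + t ^ 2)) := by
  set f : ℝ → ℝ → ℝ := fun x t => Real.sin (k * x) * (t ^ (n - 1) * Real.exp (-(x * t)))
    with hfd
  have hmeas : AEStronglyMeasurable (fun p : ℝ × ℝ => f p.1 p.2)
      ((volume.restrict (Ioc (0:ℝ) T)).prod (volume.restrict (Ioi (0:ℝ)))) := by
    apply Measurable.aestronglyMeasurable; fun_prop
  have hcong : ∀ x ∈ Ioc (0:ℝ) T,
      (∫ t in Ioi (0:ℝ), ‖f x t‖) = |Real.sin (k * x)| * ((1 / x) ^ n * Real.Gamma n) := by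
    intro x hx
    have h1 : ∀ t ∈ Ioi (0:ℝ), ‖f x t‖
        = |Real.sin (k * x)| * (t ^ (n - 1) * Real.exp (-(x * t))) := by
      intro t ht
      rw [Real.norm_eq_abs, abs_mul, abs_of_nonneg
        (mul_nonneg (Real.rpow_nonneg (le_of_lt ht) _) (Real.exp_nonneg _))]
    rw [setIntegral_congr_fun measurableSet_Ioi h1, integral_const_mul,
      integral_rpow_mul_exp_neg_mul_Ioi hn0 hx.1]
  have hint : Integrable (fun p : ℝ × ℝ => f p.1 p.2)
      ((volume.restrict (Ioc (0:ℝ) T)).prod (volume.restrict (Ioi (0:ℝ)))) := by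
    rw [MeasureTheory.integrable_prod_iff hmeas]
    refine ⟨?_, ?_⟩
    · filter_upwards [ae_restrict_mem measurableSet_Ioc] with x hx
      exact (aux_int hn0 hx.1).const_mul _
    · have hg : IntegrableOn (fun x : ℝ => |Real.sin (k * x)| * ((1 / x) ^ n * Real.Gamma n))
          (Ioc 0 T) := by
        have hmaj : IntegrableOn (fun x : ℝ => (k * Real.Gamma n) * x ^ (1 - n)) (Ioc 0 T) :=
          Integrable.const_mul ((intervalIntegrable_iff_integrableOn_Ioc_of_le hT.le).mp
            (intervalIntegral.intervalIntegrable_rpow' (by linarith))) _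
        refine Integrable.mono' hmaj ?_ ?_
        · apply Measurable.aestronglyMeasurable; fun_prop
        · filter_upwards [ae_restrict_mem measurableSet_Ioc] with x hx
          have hx0 : 0 < x := hx.1
          have e1 : (1 / x) ^ n = x ^ (-n) := by
            rw [one_div, ← Real.rpow_neg_one x, ← Real.rpow_mul hx0.le]
            ring_nf
          rw [Real.norm_eq_abs, abs_of_nonneg (by positivity), e1]
          have h1 : |Real.sin (k * x)| ≤ k * x :=
            le_trans Real.abs_sin_le_abs (le_of_eq (abs_of_pos (by positivity)))
          calc |Real.sin (k * x)| * (x ^ (-n) * Real.Gamma n)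
              ≤ (k * x) * (x ^ (-n) * Real.Gamma n) := by
                apply mul_le_mul_of_nonneg_right h1
                exact mul_nonneg (Real.rpow_nonneg hx0.le _) (Real.Gamma_nonneg_of_nonneg hn0.le)
            _ = (k * Real.Gamma n) * x ^ (1 - n) := by
                rw [show (1 - n : ℝ) = 1 + -n by ring, Real.rpow_add hx0, Real.rpow_one]
                ring
      exact IntegrableOn.congr_fun hg (fun x hx => (hcong x hx).symm) measurableSet_Ioc
  have hswap := MeasureTheory.integral_integral_swap
    (f := f) (μ := volume.restrict (Ioc (0:ℝ) T)) (ν := volume.restrict (Ioi (0:ℝ))) hint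
  have hL : (∫ x in Ioc (0:ℝ) T, ∫ t in Ioi (0:ℝ), f x t)
      = Real.Gamma n * ∫ x in Ioc (0:ℝ) T, Real.sin (k * x) / x ^ n := by
    have h1 : ∀ x ∈ Ioc (0:ℝ) T,
        (∫ t in Ioi (0:ℝ), f x t) = Real.Gamma n * (Real.sin (k * x) / x ^ n) := by
      intro x hx
      have hx0 : 0 < x := hx.1
      rw [integral_const_mul, integral_rpow_mul_exp_neg_mul_Ioi hn0 hx0]
      rw [Real.div_rpow zero_le_one hx0.le, Real.one_rpow]
      field_simp
    rw [setIntegral_congr_fun measurableSet_Ioc h1, integral_const_mul]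
  have hR : (∫ t in Ioi (0:ℝ), ∫ x in Ioc (0:ℝ) T, f x t)
      = ∫ t in Ioi (0:ℝ), t ^ (n - 1) *
          ((k - Real.exp (-(t * T)) * (t * Real.sin (k * T) + k * Real.cos (k * T)))
            / (k ^ 2 + t ^ 2)) := by
    refine setIntegral_congr_fun measurableSet_Ioi (fun t ht => ?_)
    have h2 : ∀ x : ℝ, f x t = t ^ (n - 1) * (Real.sin (k * x) * Real.exp (-(t * x))) := by
      intro x; simp only [hfd]; rw [mul_comm x t]; ring
    simp only [h2]
    rw [integral_const_mul, ← intervalIntegral.integral_of_le hT.le, aux_ftc' hk T]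
  rw [← hL, hswap, hR]

/-- For `k > 0` and `0 < n < 2`, the improper integral `∫₀^∞ sin (k x) / x ^ n dx`
converges and equals `(π/2) * k^(n-1) / (Γ(n) * sin (n π / 2))`. -/
theorem stmt11 (k n : ℝ) (hk : 0 < k) (hn0 : 0 < n) (hn2 : n < 2) :
    (∀ T : ℝ, 0 < T →
      IntegrableOn (fun x : ℝ => Real.sin (k * x) / x ^ n) (Set.Ioc 0 T)) ∧
    Tendsto (fun T : ℝ => ∫ x in Set.Ioc 0 T, Real.sin (k * x) / x ^ n)
      atTop
      (𝓝 (Real.pi / 2 * k ^ (n - 1) / (Real.Gamma n * Real.sin (n * Real.pi / 2)))) := by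
  have hΓ : 0 < Real.Gamma n := Real.Gamma_pos_of_pos hn0
  have hsin : 0 < Real.sin (n * π / 2) := sin_half_pos' hn0 hn2
  refine ⟨fun T hT => int_main hk hn0 hn2 hT, ?_⟩
  set A : ℝ := ∫ t in Ioi (0:ℝ), t ^ (n - 1) * (k / (k ^ 2 + t ^ 2)) with hA
  set E : ℝ → ℝ := fun T => ∫ t in Ioi (0:ℝ), t ^ (n - 1) *
      ((Real.exp (-(t * T)) * (t * Real.sin (k * T) + k * Real.cos (k * T)))
        / (k ^ 2 + t ^ 2)) with hE
  have key : ∀ T : ℝ, 0 < T →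
      (∫ x in Ioc (0:ℝ) T, Real.sin (k * x) / x ^ n)
        = (Real.Gamma n)⁻¹ * (A - E T) := by
    intro T hT
    have h1 := fubini_step hk hn0 hn2 hT
    have hsplit : ∀ t : ℝ, t ^ (n - 1) *
        ((k - Real.exp (-(t * T)) * (t * Real.sin (k * T) + k * Real.cos (k * T)))
          / (k ^ 2 + t ^ 2))
        = t ^ (n - 1) * (k / (k ^ 2 + t ^ 2)) - t ^ (n - 1) *
            ((Real.exp (-(t * T)) * (t * Real.sin (k * T) + k * Real.cos (k * T)))
              / (k ^ 2 + t ^ 2)) := by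
      intro t; ring
    simp only [hsplit] at h1
    rw [integral_sub (int_P1 hk hn0 hn2) (err_int hk hn0 hT)] at h1
    rw [← hA] at h1
    have h2 : Real.Gamma n * (∫ x in Ioc (0:ℝ) T, Real.sin (k * x) / x ^ n) = A - E T := h1
    field_simp at h2 ⊢
    linarith [h2]
  have h1 : Tendsto (fun T : ℝ => (1 / T) ^ n) atTop (𝓝 0) := by
    apply Tendsto.congr' _ (tendsto_rpow_neg_atTop hn0)
    filter_upwards [eventually_gt_atTop (0:ℝ)] with T hT
    rw [one_div, ← Real.rpow_neg_one T, ← Real.rpow_mul hT.le]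
    ring_nf
  have hE0 : Tendsto E atTop (𝓝 0) := by
    refine squeeze_zero_norm' (a := fun T : ℝ => (3 / (2 * k)) * ((1 / T) ^ n * Real.Gamma n))
      ?_ ?_
    · filter_upwards [eventually_gt_atTop (0:ℝ)] with T hT
      exact err_norm hk hn0 hT
    · have h2 := (h1.mul_const (Real.Gamma n)).const_mul (3 / (2 * k))
      simpa using h2
  have hfin : Tendsto (fun T : ℝ => (Real.Gamma n)⁻¹ * (A - E T)) atTop
      (𝓝 ((Real.Gamma n)⁻¹ * (A - 0))) :=
    (tendsto_const_nhds.sub hE0).const_mul _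
  have hlim : Tendsto (fun T : ℝ => ∫ x in Ioc (0:ℝ) T, Real.sin (k * x) / x ^ n) atTop
      (𝓝 ((Real.Gamma n)⁻¹ * (A - 0))) := by
    apply Tendsto.congr' _ hfin
    filter_upwards [eventually_gt_atTop (0:ℝ)] with T hT
    exact (key T hT).symm
  convert hlim using 2
  rw [sub_zero, hA, P1_value' hk hn0 hn2]
  field_simp
end

section
/- Let k be a positive real number and n a real number with 0 < n < 1. Then the improper integral ∫₀^∞ cos(k x) / x^n dx converges and equals (π/2) · k^(n−1) / (Γ(n) · cos(n π / 2)); that is, the integrand is Lebesgue integrable on (0,T] for every T > 0 and ∫_{(0,T]} cos(k x)/x^n dx → (π/2) · k^(n−1) / (Γ(n) · cos(n π / 2)) as T → ∞. -/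
set_option maxHeartbeats 1000000

open Real MeasureTheory Set Filter Topology

namespace Stmt12Aux

theorem I_eval (k : ℝ) (hk : 0 < k) (t T : ℝ) :
    ∫ x in (0:ℝ)..T, Real.cos (k * x) * Real.exp (-(x * t))
      = (Real.exp (-(T * t)) * (k * Real.sin (k * T) - t * Real.cos (k * T)) + t)
          / (t ^ 2 + k ^ 2) := by
  have hden : t ^ 2 + k ^ 2 ≠ 0 := by positivity
  have key : ∀ x : ℝ, HasDerivAt
      (fun y => Real.exp (-(y * t)) * (k * Real.sin (k * y) - t * Real.cos (k * y))
        / (t ^ 2 + k ^ 2))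
      (Real.cos (k * x) * Real.exp (-(x * t))) x := by
    intro x
    have h1 : HasDerivAt (fun y : ℝ => Real.exp (-(y * t))) (Real.exp (-(x * t)) * -t) x := by
      simpa using (((hasDerivAt_id x).mul_const t).neg).exp
    have h2 : HasDerivAt (fun y : ℝ => Real.sin (k * y)) (Real.cos (k * x) * k) x := by
      simpa using ((hasDerivAt_id x).const_mul k).sin
    have h3 : HasDerivAt (fun y : ℝ => Real.cos (k * y)) (-Real.sin (k * x) * k) x := by
      simpa using ((hasDerivAt_id x).const_mul k).cos
    have h := (h1.mul ((h2.const_mul k).sub (h3.const_mul t))).div_const (t ^ 2 + k ^ 2)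
    refine h.congr_deriv ?_
    field_simp
    simp only [Pi.sub_apply]
    ring
  have hcont : IntervalIntegrable (fun x => Real.cos (k * x) * Real.exp (-(x * t)))
      MeasureTheory.volume 0 T := by
    apply Continuous.intervalIntegrable
    fun_prop
  rw [intervalIntegral.integral_eq_sub_of_hasDerivAt (fun x _ => key x) hcont]
  simp
  ring

theorem integrableOn_main {k n : ℝ} (hk : 0 < k) (hn0 : 0 < n) (hn1 : n < 1) :
    IntegrableOn (fun t : ℝ => t ^ n / (t ^ 2 + k ^ 2)) (Ioi 0) := by
  have hmeas : Measurable (fun t : ℝ => t ^ n / (t ^ 2 + k ^ 2)) := by fun_prop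
  have h1 : IntegrableOn (fun t : ℝ => t ^ n / (t ^ 2 + k ^ 2)) (Ioc 0 1) := by
    refine Integrable.mono' (g := fun _ => 1 / k ^ 2)
      (integrableOn_const measure_Ioc_lt_top.ne)
      hmeas.aestronglyMeasurable.restrict ?_
    filter_upwards [ae_restrict_mem measurableSet_Ioc] with t ht
    rw [Real.norm_eq_abs,
      abs_of_nonneg (div_nonneg (Real.rpow_nonneg ht.1.le n) (by positivity))]
    exact div_le_div₀ zero_le_one (Real.rpow_le_one ht.1.le ht.2 hn0.le) (by positivity)
      (by nlinarith [sq_nonneg t])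
  have h2 : IntegrableOn (fun t : ℝ => t ^ n / (t ^ 2 + k ^ 2)) (Ioi 1) := by
    refine Integrable.mono' (g := fun t => t ^ (n - 2))
      (integrableOn_Ioi_rpow_of_lt (by linarith) one_pos)
      hmeas.aestronglyMeasurable.restrict ?_
    filter_upwards [ae_restrict_mem measurableSet_Ioi] with t ht
    have ht0 : (0:ℝ) < t := lt_trans one_pos ht
    rw [Real.norm_eq_abs,
      abs_of_nonneg (div_nonneg (Real.rpow_nonneg ht0.le n) (by positivity))]
    calc t ^ n / (t ^ 2 + k ^ 2) ≤ t ^ n / t ^ 2 :=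
          div_le_div₀ (Real.rpow_nonneg ht0.le n) le_rfl (by positivity)
            (by nlinarith [sq_nonneg k])
      _ = t ^ (n - 2) := by rw [← Real.rpow_two, ← Real.rpow_sub ht0]
  have := h1.union h2
  rwa [Ioc_union_Ioi_eq_Ioi (by norm_num : (0:ℝ) ≤ 1)] at this

theorem exp_int {a : ℝ} (ha : 0 < a) : ∫ s in Ioi (0:ℝ), Real.exp (-(a * s)) = 1 / a := by
  have h := integral_exp_neg_mul_rpow (p := 1) (b := a) one_pos ha
  simp only [Real.rpow_one, neg_mul] at h
  rw [h]
  norm_num [Real.Gamma_two, Real.rpow_neg_one]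

theorem main_eval {k n : ℝ} (hk : 0 < k) (hn0 : 0 < n) (hn1 : n < 1) :
    ∫ t in Ioi (0:ℝ), t ^ n / (t ^ 2 + k ^ 2)
      = π / 2 * k ^ (n - 1) / Real.cos (n * π / 2) := by
  set f : ℝ → ℝ → ℝ := fun t s => t ^ n * Real.exp (-((t ^ 2 + k ^ 2) * s)) with hf
  have hmeas : Measurable (Function.uncurry f) := by
    apply Measurable.mul <;> fun_prop
  have hpt : ∀ t : ℝ, 0 < t → t ^ n / (t ^ 2 + k ^ 2) = ∫ s in Ioi (0:ℝ), f t s := by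
    intro t ht
    rw [hf]
    simp only
    rw [MeasureTheory.integral_const_mul, exp_int (by positivity), div_eq_mul_one_div]
  have hslice : ∀ t : ℝ, Integrable (fun s => f t s) (volume.restrict (Ioi (0:ℝ))) := by
    intro t
    have : IntegrableOn (fun s : ℝ => Real.exp (-(t ^ 2 + k ^ 2) * s)) (Ioi 0) :=
      exp_neg_integrableOn_Ioi 0 (by positivity)
    simpa only [hf, neg_mul] using this.const_mul (t ^ n)
  have hprod : Integrable (Function.uncurry f)
      ((volume.restrict (Ioi (0:ℝ))).prod (volume.restrict (Ioi (0:ℝ)))) := by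
    rw [MeasureTheory.integrable_prod_iff hmeas.aestronglyMeasurable]
    constructor
    · exact Eventually.of_forall fun t => hslice t
    · apply ((integrableOn_main hk hn0 hn1).congr ?_ : Integrable _ _)
      filter_upwards [ae_restrict_mem measurableSet_Ioi] with t ht
      rw [hpt t ht]
      apply integral_congr_ae
      filter_upwards [ae_restrict_mem measurableSet_Ioi] with s hs
      simp only [Function.uncurry_apply_pair, Real.norm_eq_abs]
      exact (abs_of_nonneg (mul_nonneg (Real.rpow_nonneg (le_of_lt ht) n)
        (Real.exp_pos _).le)).symm
  have hswap : ∫ t in Ioi (0:ℝ), ∫ s in Ioi (0:ℝ), f t s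
      = ∫ s in Ioi (0:ℝ), ∫ t in Ioi (0:ℝ), f t s :=
    MeasureTheory.integral_integral_swap hprod
  have hinner : ∀ s : ℝ, s ∈ Ioi (0:ℝ) → ∫ t in Ioi (0:ℝ), f t s
      = Real.exp (-(k ^ 2 * s)) * (s ^ (-(n + 1) / 2) * (1 / 2)
          * Real.Gamma ((n + 1) / 2)) := by
    intro s hs
    rw [mem_Ioi] at hs
    have heq : ∀ t : ℝ, f t s = Real.exp (-(k ^ 2 * s)) * (t ^ n * Real.exp (-s * t ^ (2:ℝ))) := by
      intro t
      have h1 : -((t ^ 2 + k ^ 2) * s) = -(k ^ 2 * s) + -s * t ^ (2:ℝ) := by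
        rw [Real.rpow_two]; ring
      rw [hf]
      simp only
      rw [h1, Real.exp_add]
      ring
    simp_rw [heq]
    rw [MeasureTheory.integral_const_mul,
      integral_rpow_mul_exp_neg_mul_rpow two_pos (by linarith) hs]
  have houter : ∫ s in Ioi (0:ℝ), Real.exp (-(k ^ 2 * s))
        * (s ^ (-(n + 1) / 2) * (1 / 2) * Real.Gamma ((n + 1) / 2))
      = (1 / 2) * Real.Gamma ((n + 1) / 2) * ((k ^ 2) ^ (-(-(n + 1) / 2 + 1) / 1)
          * Real.Gamma (-(n + 1) / 2 + 1)) := by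
    have h := integral_rpow_mul_exp_neg_mul_rpow (p := 1) (q := -(n + 1) / 2) (b := k ^ 2)
      one_pos (by linarith) (by positivity)
    simp only [Real.rpow_one, neg_mul] at h
    calc ∫ s in Ioi (0:ℝ), Real.exp (-(k ^ 2 * s))
          * (s ^ (-(n + 1) / 2) * (1 / 2) * Real.Gamma ((n + 1) / 2))
        = ∫ s in Ioi (0:ℝ), ((1:ℝ) / 2 * Real.Gamma ((n + 1) / 2))
            * (s ^ (-(n + 1) / 2) * Real.exp (-(k ^ 2 * s))) := by
          apply integral_congr_ae; apply Eventually.of_forall; intro s; simp only; ring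
      _ = _ := by
          rw [MeasureTheory.integral_const_mul, h]
          ring
  rw [setIntegral_congr_fun measurableSet_Ioi (fun t ht => hpt t ht), hswap,
    setIntegral_congr_fun measurableSet_Ioi hinner, houter]
  -- algebra
  have hexp1 : (-(-(n + 1) / 2 + 1) / 1 : ℝ) = (n - 1) / 2 := by ring
  have hexp2 : (-(n + 1) / 2 + 1 : ℝ) = (1 - n) / 2 := by ring
  rw [hexp1, hexp2]
  have hk2 : (k ^ 2 : ℝ) ^ ((n - 1) / 2) = k ^ (n - 1) := by
    rw [← Real.rpow_two, ← Real.rpow_mul hk.le]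
    norm_num
    ring_nf
  rw [hk2]
  have hrefl := Real.Gamma_mul_Gamma_one_sub ((n + 1) / 2)
  rw [show (1 : ℝ) - (n + 1) / 2 = (1 - n) / 2 by ring,
    show (π : ℝ) * ((n + 1) / 2) = n * π / 2 + π / 2 by ring,
    Real.sin_add_pi_div_two] at hrefl
  rw [show (1 / 2 : ℝ) * Real.Gamma ((n + 1) / 2) * (k ^ (n - 1) * Real.Gamma ((1 - n) / 2))
      = 1 / 2 * k ^ (n - 1) * (Real.Gamma ((n + 1) / 2) * Real.Gamma ((1 - n) / 2)) by ring,
    hrefl, show Real.cos (n * π / 2) = Real.cos (n * (π / 2)) by ring_nf]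
  ring

theorem int_texp {n : ℝ} (hn0 : 0 < n) {x : ℝ} (hx : 0 < x) :
    IntegrableOn (fun t : ℝ => t ^ (n - 1) * Real.exp (-(x * t))) (Ioi 0) := by
  have h := integrableOn_rpow_mul_exp_neg_mul_rpow (p := 1) (s := n - 1) (b := x)
    (by linarith) one_pos hx
  refine h.congr_fun (fun t _ => ?_) measurableSet_Ioi
  simp only [Real.rpow_one, neg_mul]

theorem val_texp {n : ℝ} (hn0 : 0 < n) {x : ℝ} (hx : 0 < x) :
    ∫ t in Ioi (0:ℝ), t ^ (n - 1) * Real.exp (-(x * t)) = Real.Gamma n * x ^ (-n) := by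
  have h := integral_rpow_mul_exp_neg_mul_rpow (p := 1) (q := n - 1) (b := x)
    one_pos (by linarith) hx
  simp only [Real.rpow_one, neg_mul] at h ⊢
  rw [h]; norm_num; ring

theorem formula {k n : ℝ} (hk : 0 < k) (hn0 : 0 < n) (hn1 : n < 1)
    {T : ℝ} (hT : 0 < T) :
    ∫ x in Ioc (0:ℝ) T, Real.cos (k * x) / x ^ n
      = (Real.Gamma n)⁻¹ * ∫ t in Ioi (0:ℝ), t ^ (n - 1)
          * ((Real.exp (-(T * t)) * (k * Real.sin (k * T) - t * Real.cos (k * T)) + t)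
              / (t ^ 2 + k ^ 2)) := by
  have hG : 0 < Real.Gamma n := Real.Gamma_pos_of_pos hn0
  set g : ℝ → ℝ → ℝ := fun x t => Real.cos (k * x) * (t ^ (n - 1) * Real.exp (-(x * t)))
    with hg
  have hmeas : Measurable (Function.uncurry g) := by
    apply Measurable.mul <;> fun_prop
  -- slice integral in t
  have hslice_val : ∀ x : ℝ, 0 < x → ∫ t in Ioi (0:ℝ), g x t
      = Real.cos (k * x) * (Real.Gamma n * x ^ (-n)) := by
    intro x hx
    rw [hg]
    simp only
    rw [MeasureTheory.integral_const_mul, val_texp hn0 hx]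
  have hpt : ∀ x ∈ Ioc (0:ℝ) T, Real.cos (k * x) / x ^ n
      = (Real.Gamma n)⁻¹ * ∫ t in Ioi (0:ℝ), g x t := by
    intro x hx
    rw [hslice_val x hx.1, Real.rpow_neg hx.1.le, div_eq_mul_inv]
    field_simp
  -- product integrability
  have hprod : Integrable (Function.uncurry g)
      ((volume.restrict (Ioc (0:ℝ) T)).prod (volume.restrict (Ioi (0:ℝ)))) := by
    rw [MeasureTheory.integrable_prod_iff hmeas.aestronglyMeasurable]
    constructor
    · filter_upwards [ae_restrict_mem measurableSet_Ioc] with x hx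
      simp only [hg, Function.uncurry_apply_pair]
      exact (int_texp hn0 hx.1).const_mul _
    · refine Integrable.mono' (g := fun x : ℝ => Real.Gamma n * x ^ (-n))
        (((intervalIntegral.intervalIntegrable_rpow' (by linarith : (-1:ℝ) < -n)).1).const_mul _)
        ((hmeas.aestronglyMeasurable.norm).integral_prod_right') ?_
      filter_upwards [ae_restrict_mem measurableSet_Ioc] with x hx
      have hval : ∫ t in Ioi (0:ℝ), ‖Function.uncurry g (x, t)‖
          = |Real.cos (k * x)| * (Real.Gamma n * x ^ (-n)) := by
        rw [← val_texp hn0 hx.1, ← MeasureTheory.integral_const_mul]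
        apply setIntegral_congr_fun measurableSet_Ioi
        intro t ht
        simp only [hg, Function.uncurry_apply_pair, Real.norm_eq_abs, abs_mul,
          abs_of_nonneg (Real.rpow_nonneg (le_of_lt ht) (n-1)),
          abs_of_pos (Real.exp_pos _)]
      rw [Real.norm_eq_abs, hval, abs_of_nonneg (mul_nonneg (abs_nonneg _)
        (mul_nonneg hG.le (Real.rpow_nonneg hx.1.le _)))]
      exact mul_le_of_le_one_left
        (mul_nonneg hG.le (Real.rpow_nonneg hx.1.le _)) (Real.abs_cos_le_one _)
  -- swap
  have hswap : ∫ x in Ioc (0:ℝ) T, ∫ t in Ioi (0:ℝ), g x t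
      = ∫ t in Ioi (0:ℝ), ∫ x in Ioc (0:ℝ) T, g x t :=
    MeasureTheory.integral_integral_swap hprod
  -- inner over x
  have hinner : ∀ t ∈ Ioi (0:ℝ), ∫ x in Ioc (0:ℝ) T, g x t
      = t ^ (n - 1) * ((Real.exp (-(T * t)) * (k * Real.sin (k * T) - t * Real.cos (k * T)) + t)
          / (t ^ 2 + k ^ 2)) := by
    intro t ht
    have h1 : ∫ x in Ioc (0:ℝ) T, g x t
        = t ^ (n - 1) * ∫ x in Ioc (0:ℝ) T, Real.cos (k * x) * Real.exp (-(x * t)) := by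
      rw [← MeasureTheory.integral_const_mul]
      apply setIntegral_congr_fun measurableSet_Ioc
      intro x _
      rw [hg]; simp only; ring
    rw [h1, ← intervalIntegral.integral_of_le hT.le, I_eval k hk t T]
  calc ∫ x in Ioc (0:ℝ) T, Real.cos (k * x) / x ^ n
      = ∫ x in Ioc (0:ℝ) T, (Real.Gamma n)⁻¹ * ∫ t in Ioi (0:ℝ), g x t :=
        setIntegral_congr_fun measurableSet_Ioc hpt
    _ = (Real.Gamma n)⁻¹ * ∫ x in Ioc (0:ℝ) T, ∫ t in Ioi (0:ℝ), g x t :=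
        MeasureTheory.integral_const_mul _ _
    _ = _ := by
        rw [hswap, setIntegral_congr_fun measurableSet_Ioi hinner]

end Stmt12Aux

open Stmt12Aux

/-- For `k > 0` and `0 < n < 1`, the improper integral `∫₀^∞ cos (k x) / x ^ n dx`
converges and equals `(π/2) * k^(n-1) / (Γ(n) * cos (n π / 2))`. -/
theorem stmt12 (k n : ℝ) (hk : 0 < k) (hn0 : 0 < n) (hn1 : n < 1) :
    (∀ T : ℝ, 0 < T →
      IntegrableOn (fun x : ℝ => Real.cos (k * x) / x ^ n) (Set.Ioc 0 T)) ∧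
    Tendsto (fun T : ℝ => ∫ x in Set.Ioc 0 T, Real.cos (k * x) / x ^ n)
      atTop
      (𝓝 (Real.pi / 2 * k ^ (n - 1) / (Real.Gamma n * Real.cos (n * Real.pi / 2)))) := by
  have hG : 0 < Real.Gamma n := Real.Gamma_pos_of_pos hn0
  have hcos : 0 < Real.cos (n * π / 2) := by
    apply Real.cos_pos_of_mem_Ioo
    constructor
    · nlinarith [Real.pi_pos]
    · nlinarith [Real.pi_pos]
  have haux : ∀ t T : ℝ, 0 < t →
      |k * Real.sin (k * T) - t * Real.cos (k * T)| ≤ k + t := by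
    intro t T ht
    calc |k * Real.sin (k * T) - t * Real.cos (k * T)|
        ≤ |k * Real.sin (k * T)| + |t * Real.cos (k * T)| := abs_sub _ _
      _ ≤ k + t := by
          rw [abs_mul, abs_mul, abs_of_pos hk, abs_of_pos ht]
          have := Real.abs_sin_le_one (k * T)
          have := Real.abs_cos_le_one (k * T)
          nlinarith
  constructor
  · intro T hT
    refine Integrable.mono' (g := fun x : ℝ => x ^ (-n))
      ((intervalIntegral.intervalIntegrable_rpow' (by linarith : (-1:ℝ) < -n)).1)
      (by fun_prop : Measurable fun x : ℝ => Real.cos (k * x) / x ^ n).aestronglyMeasurable.restrict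
      ?_
    filter_upwards [ae_restrict_mem measurableSet_Ioc] with x hx
    rw [Real.norm_eq_abs, abs_div, Real.rpow_neg hx.1.le,
      abs_of_pos (Real.rpow_pos_of_pos hx.1 n), div_eq_mul_inv]
    exact mul_le_of_le_one_left (inv_nonneg.2 (Real.rpow_nonneg hx.1.le n))
      (Real.abs_cos_le_one _)
  · set F : ℝ → ℝ → ℝ := fun T t => t ^ (n - 1)
      * ((Real.exp (-(T * t)) * (k * Real.sin (k * T) - t * Real.cos (k * T)) + t)
          / (t ^ 2 + k ^ 2)) with hF
    have hbound_int : IntegrableOn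
        (fun t : ℝ => t ^ (n - 1) * Real.exp (-t) * (k + t) / k ^ 2 + t ^ n / (t ^ 2 + k ^ 2))
        (Ioi 0) := by
      apply Integrable.add _ (integrableOn_main hk hn0 hn1)
      have h1 := Real.GammaIntegral_convergent hn0
      have h2 := Real.GammaIntegral_convergent (by linarith : (0:ℝ) < n + 1)
      have h3 : IntegrableOn (fun x : ℝ => k / k ^ 2 * (Real.exp (-x) * x ^ (n - 1))
          + 1 / k ^ 2 * (Real.exp (-x) * x ^ (n + 1 - 1))) (Ioi 0) :=
        (h1.const_mul _).add (h2.const_mul _)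
      refine h3.congr_fun (fun t ht => ?_) measurableSet_Ioi
      rw [mem_Ioi] at ht
      have htn : t ^ (n + 1 - 1) = t ^ (n - 1) * t := by
        rw [show n + 1 - 1 = (n - 1) + 1 by ring, Real.rpow_add ht, Real.rpow_one]
      simp only [htn]
      field_simp
    have hDCT : Tendsto (fun T => ∫ t in Ioi (0:ℝ), F T t) atTop
        (𝓝 (∫ t in Ioi (0:ℝ), t ^ n / (t ^ 2 + k ^ 2))) := by
      apply MeasureTheory.tendsto_integral_filter_of_dominated_convergence
        (fun t : ℝ => t ^ (n - 1) * Real.exp (-t) * (k + t) / k ^ 2 + t ^ n / (t ^ 2 + k ^ 2))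
      · apply Eventually.of_forall
        intro T
        apply Measurable.aestronglyMeasurable
        fun_prop
      · filter_upwards [eventually_ge_atTop (1:ℝ)] with T hT1
        filter_upwards [ae_restrict_mem measurableSet_Ioi] with t ht
        rw [mem_Ioi] at ht
        have hden : (0:ℝ) < t ^ 2 + k ^ 2 := by positivity
        have hA : (0:ℝ) ≤ t ^ (n - 1) := Real.rpow_nonneg ht.le _
        have htn : t ^ (n - 1) * t = t ^ n := by
          have h := Real.rpow_add ht (n - 1) 1
          rw [Real.rpow_one] at h
          rw [← h]; norm_num
        have h2 : Real.exp (-(T * t)) ≤ Real.exp (-t) := by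
          apply Real.exp_le_exp.2; nlinarith
        have hnum : |Real.exp (-(T * t)) * (k * Real.sin (k * T) - t * Real.cos (k * T)) + t|
            ≤ Real.exp (-t) * (k + t) + t := by
          calc |Real.exp (-(T * t)) * (k * Real.sin (k * T) - t * Real.cos (k * T)) + t|
              ≤ |Real.exp (-(T * t)) * (k * Real.sin (k * T) - t * Real.cos (k * T))| + t := by
                refine (abs_add_le _ _).trans ?_
                rw [abs_of_pos ht]
            _ ≤ Real.exp (-t) * (k + t) + t := by
                rw [abs_mul, abs_of_pos (Real.exp_pos _)]
                have := mul_le_mul h2 (haux t T ht) (abs_nonneg _) (Real.exp_pos _).le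
                linarith
        rw [hF]
        simp only [Real.norm_eq_abs, abs_mul, abs_div,
          abs_of_nonneg hA, abs_of_pos hden]
        calc t ^ (n - 1) * (|Real.exp (-(T * t)) * (k * Real.sin (k * T)
                - t * Real.cos (k * T)) + t| / (t ^ 2 + k ^ 2))
            ≤ t ^ (n - 1) * ((Real.exp (-t) * (k + t) + t) / (t ^ 2 + k ^ 2)) := by
              apply mul_le_mul_of_nonneg_left _ hA
              exact (div_le_div_iff_of_pos_right hden).2 hnum
          _ = t ^ (n - 1) * Real.exp (-t) * (k + t) / (t ^ 2 + k ^ 2)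
                + t ^ n / (t ^ 2 + k ^ 2) := by
              rw [← htn]; field_simp
          _ ≤ t ^ (n - 1) * Real.exp (-t) * (k + t) / k ^ 2 + t ^ n / (t ^ 2 + k ^ 2) := by
              have hnum0 : (0:ℝ) ≤ t ^ (n - 1) * Real.exp (-t) * (k + t) := by
                apply mul_nonneg (mul_nonneg hA (Real.exp_pos _).le); nlinarith
              have : t ^ (n - 1) * Real.exp (-t) * (k + t) / (t ^ 2 + k ^ 2)
                  ≤ t ^ (n - 1) * Real.exp (-t) * (k + t) / k ^ 2 := by
                apply div_le_div_of_nonneg_left hnum0 (by positivity)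
                nlinarith
              linarith
      · exact hbound_int
      · filter_upwards [ae_restrict_mem measurableSet_Ioi] with t ht
        rw [mem_Ioi] at ht
        have hden : (0:ℝ) < t ^ 2 + k ^ 2 := by positivity
        have htn : t ^ (n - 1) * t = t ^ n := by
          have h := Real.rpow_add ht (n - 1) 1
          rw [Real.rpow_one] at h
          rw [← h]; norm_num
        have hsplit : ∀ T : ℝ, F T t - t ^ n / (t ^ 2 + k ^ 2)
            = t ^ (n - 1) * (k * Real.sin (k * T) - t * Real.cos (k * T)) / (t ^ 2 + k ^ 2)
              * Real.exp (-(T * t)) := by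
          intro T
          rw [hF]
          simp only
          rw [← htn]
          field_simp
          ring
        have hexp : Tendsto (fun T : ℝ => Real.exp (-(T * t))) atTop (𝓝 0) := by
          have h0 : Tendsto (fun T : ℝ => T * t) atTop atTop :=
            tendsto_id.atTop_mul_const ht
          exact (Real.tendsto_exp_neg_atTop_nhds_zero).comp h0
        have hzero : Tendsto (fun T => F T t - t ^ n / (t ^ 2 + k ^ 2)) atTop (𝓝 0) := by
          refine squeeze_zero_norm (a := fun T : ℝ =>
            t ^ (n - 1) * (k + t) / (t ^ 2 + k ^ 2) * Real.exp (-(T * t))) (fun T => ?_) ?_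
          · rw [hsplit T, Real.norm_eq_abs, abs_mul, abs_of_pos (Real.exp_pos _), abs_div,
              abs_of_pos hden, abs_mul, abs_of_nonneg (Real.rpow_nonneg ht.le _)]
            apply mul_le_mul_of_nonneg_right _ (Real.exp_pos _).le
            exact (div_le_div_iff_of_pos_right hden).2
              (mul_le_mul_of_nonneg_left (haux t T ht) (Real.rpow_nonneg ht.le _))
          · simpa using hexp.const_mul (t ^ (n - 1) * (k + t) / (t ^ 2 + k ^ 2))
        have := hzero.add (tendsto_const_nhds (x := t ^ n / (t ^ 2 + k ^ 2)))
        simpa using this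
    have heq : ∀ᶠ T in atTop, ∫ x in Ioc (0:ℝ) T, Real.cos (k * x) / x ^ n
        = (Real.Gamma n)⁻¹ * ∫ t in Ioi (0:ℝ), F T t :=
      (eventually_gt_atTop (0:ℝ)).mono fun T hT => formula hk hn0 hn1 hT
    have hval : (Real.Gamma n)⁻¹ * (π / 2 * k ^ (n - 1) / Real.cos (n * π / 2))
        = π / 2 * k ^ (n - 1) / (Real.Gamma n * Real.cos (n * π / 2)) := by
      field_simp
    have hlim : Tendsto (fun T => (Real.Gamma n)⁻¹ * ∫ t in Ioi (0:ℝ), F T t) atTop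
        (𝓝 (π / 2 * k ^ (n - 1) / (Real.Gamma n * Real.cos (n * π / 2)))) := by
      rw [← hval, ← main_eval hk hn0 hn1]
      exact hDCT.const_mul _
    exact Tendsto.congr' (EventuallyEq.symm heq) hlim
end

section
/- Let b be a positive integer and let c₁, …, c_b be real numbers. The improper integral ∫₀^∞ (Σ_{k=1}^b c_k cos(k x)) / x dx converges if and only if Σ_{k=1}^b c_k = 0, and in that case its value equals −Σ_{k=1}^b c_k · ln k; that is, ∫_{(0,T]} (Σ_{k=1}^b c_k cos(k x))/x dx → −Σ_{k=1}^b c_k ln k as T → ∞. -/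
open Real MeasureTheory Set Filter Topology Finset

noncomputable def hh (u : ℝ) : ℝ := (Real.cos u - 1) / u
noncomputable def FF (T : ℝ) : ℝ := ∫ u in Set.Ioc 0 T, hh u

lemma hh_abs_le (u : ℝ) : |hh u| ≤ |u| / 2 := by
  rcases eq_or_ne u 0 with rfl | hu
  · simp [hh]
  · have hu0 : 0 < |u| := abs_pos.mpr hu
    have h1 : |Real.cos u - 1| ≤ u ^ 2 / 2 := by
      rw [abs_sub_comm, abs_of_nonneg (by linarith [Real.cos_le_one u])]
      linarith [Real.one_sub_sq_div_two_le_cos (x := u)]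
    rw [hh, abs_div]
    calc |Real.cos u - 1| / |u| ≤ (u ^ 2 / 2) / |u| := by
          gcongr
      _ = |u| / 2 := by rw [← sq_abs]; field_simp

lemma hh_meas : Measurable hh :=
  (Real.measurable_cos.sub measurable_const).div measurable_id

lemma hh_intOn (k T : ℝ) (hk : 0 < k) :
    IntegrableOn (fun x => hh (k * x)) (Set.Ioc 0 T) := by
  rcases le_or_gt T 0 with hT | hT
  · rw [Set.Ioc_eq_empty (by exact fun h => absurd (h.trans_le hT) (lt_irrefl 0))]
    exact integrableOn_empty
  · refine Measure.integrableOn_of_bounded (measure_Ioc_lt_top.ne)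
      ((hh_meas.comp (measurable_const_mul k)).aestronglyMeasurable) (M := k * T / 2) ?_
    refine (ae_restrict_iff' measurableSet_Ioc).mpr (.of_forall fun x hx => ?_)
    have := hh_abs_le (k * x)
    rw [Real.norm_eq_abs]
    have h1 : |k * x| = k * x := abs_of_pos (mul_pos hk hx.1)
    nlinarith [hx.1, hx.2]

lemma FF_sub (k : ℕ) (hk : 1 ≤ k) (T : ℝ) (hT : 0 < T) :
    ∫ x in Set.Ioc 0 T, (Real.cos ((k : ℝ) * x) - 1) / x = FF ((k : ℝ) * T) := by
  have hk0 : (0 : ℝ) < k := by exact_mod_cast hk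
  have e1 : Set.EqOn (fun x => (Real.cos ((k : ℝ) * x) - 1) / x)
      (fun x => (k : ℝ) * hh ((k : ℝ) * x)) (Set.Ioc 0 T) := by
    intro x hx
    have hx0 : x ≠ 0 := ne_of_gt hx.1
    simp only [hh]
    rw [mul_div_assoc', mul_div_mul_left _ _ hk0.ne']
  rw [setIntegral_congr_fun measurableSet_Ioc e1]
  rw [← intervalIntegral.integral_of_le hT.le]
  have h2 := intervalIntegral.smul_integral_comp_mul_left (f := hh) (a := 0) (b := T) (k : ℝ)
  rw [intervalIntegral.integral_const_mul]
  have : (k : ℝ) • ∫ x in (0:ℝ)..T, hh ((k : ℝ) * x) = (k:ℝ) * ∫ x in (0:ℝ)..T, hh ((k:ℝ) * x) := by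
    simp [smul_eq_mul]
  rw [← this, h2, mul_zero, intervalIntegral.integral_of_le (by positivity), FF]

lemma FF_tendsto : ∃ A : ℝ, Tendsto (fun T => FF T + Real.log T) atTop (𝓝 A) := by
  -- integrability of sin u / u^2 on Ioi 1
  have hint : IntegrableOn (fun u => Real.sin u / u ^ 2) (Set.Ioi 1) := by
    refine Integrable.mono' (g := fun u : ℝ => u ^ (-2 : ℝ))
      (integrableOn_Ioi_rpow_of_lt (by norm_num) one_pos)
      ((Real.measurable_sin.div (measurable_id.pow_const 2)).aestronglyMeasurable) ?_
    refine (ae_restrict_iff' measurableSet_Ioi).mpr (.of_forall fun u hu => ?_)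
    have hu1 : (1:ℝ) < u := hu
    have hu0 : (0:ℝ) < u := lt_trans one_pos hu1
    have e2 : u ^ (-2 : ℝ) = (u ^ 2)⁻¹ := by
      rw [Real.rpow_neg hu0.le, show ((2:ℝ)) = ((2:ℕ):ℝ) by norm_num, Real.rpow_natCast]
    rw [Real.norm_eq_abs, abs_div]
    simp only [e2]
    rw [abs_of_pos (by positivity : (0:ℝ) < u ^ 2), div_le_iff₀ (by positivity),
      inv_mul_cancel₀ (by positivity)]
    exact Real.abs_sin_le_one u
  have hsin := MeasureTheory.intervalIntegral_tendsto_integral_Ioi 1 hint tendsto_id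
  -- integration by parts
  have ibp : ∀ T : ℝ, 1 ≤ T →
      ∫ u in (1:ℝ)..T, Real.cos u / u =
        (Real.sin T * T⁻¹ - Real.sin 1 * 1⁻¹) + ∫ u in (1:ℝ)..T, Real.sin u / u ^ 2 := by
    intro T hT
    have huIcc : Set.uIcc (1:ℝ) T = Set.Icc 1 T := Set.uIcc_of_le hT
    have hpos : ∀ u ∈ Set.uIcc (1:ℝ) T, (0:ℝ) < u := by
      intro u hu; rw [huIcc] at hu; linarith [hu.1]
    have hderiv : ∀ u ∈ Set.uIcc (1:ℝ) T,
        HasDerivAt (fun v => Real.sin v * v⁻¹)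
          (Real.cos u * u⁻¹ + Real.sin u * (-(u ^ 2)⁻¹)) u := by
      intro u hu
      exact (Real.hasDerivAt_sin u).mul (hasDerivAt_inv (hpos u hu).ne')
    have hcontd : IntervalIntegrable
        (fun u => Real.cos u * u⁻¹ + Real.sin u * (-(u ^ 2)⁻¹)) volume 1 T := by
      apply ContinuousOn.intervalIntegrable
      apply ContinuousOn.add
      · exact Real.continuous_cos.continuousOn.mul
          (continuousOn_id.inv₀ fun u hu => (hpos u hu).ne')
      · exact Real.continuous_sin.continuousOn.mul
          (((continuousOn_id.pow 2).inv₀ fun u hu => pow_ne_zero _ (hpos u hu).ne').neg)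
    have hconts : IntervalIntegrable (fun u => Real.sin u / u ^ 2) volume 1 T := by
      apply ContinuousOn.intervalIntegrable
      exact Real.continuous_sin.continuousOn.div (continuousOn_id.pow 2)
        fun u hu => by have := hpos u hu; positivity
    have heq := intervalIntegral.integral_eq_sub_of_hasDerivAt hderiv hcontd
    have hfun : (fun u : ℝ => Real.cos u / u) =
        fun u => (Real.cos u * u⁻¹ + Real.sin u * (-(u ^ 2)⁻¹)) + Real.sin u / u ^ 2 := by
      funext u; rw [div_eq_mul_inv, div_eq_mul_inv]; ring
    rw [hfun, intervalIntegral.integral_add hcontd hconts, heq]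
  have hzero : Tendsto (fun T : ℝ => Real.sin T * T⁻¹) atTop (𝓝 0) := by
    apply squeeze_zero_norm' ?_ tendsto_inv_atTop_zero
    filter_upwards [eventually_ge_atTop (1:ℝ)] with T hT
    have hT0 : (0:ℝ) < T := lt_of_lt_of_le one_pos hT
    rw [norm_mul, Real.norm_eq_abs, Real.norm_eq_abs, abs_of_pos (by positivity : (0:ℝ) < T⁻¹)]
    calc |Real.sin T| * T⁻¹ ≤ 1 * T⁻¹ := by
          exact mul_le_mul_of_nonneg_right (Real.abs_sin_le_one T) (by positivity)
      _ = T⁻¹ := one_mul _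
  have hG : Tendsto (fun T => ∫ u in (1:ℝ)..T, Real.cos u / u) atTop
      (𝓝 ((0 - Real.sin 1 * 1⁻¹) + ∫ u in Set.Ioi 1, Real.sin u / u ^ 2)) := by
    apply Tendsto.congr' ((eventually_ge_atTop (1:ℝ)).mono fun T hT => (ibp T hT).symm)
    exact ((hzero.sub tendsto_const_nhds).add hsin)
  refine ⟨FF 1 + ((0 - Real.sin 1 * 1⁻¹) + ∫ u in Set.Ioi 1, Real.sin u / u ^ 2), ?_⟩
  apply Tendsto.congr' ?_ (tendsto_const_nhds.add hG)
  filter_upwards [eventually_ge_atTop (1:ℝ)] with T hT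
  have hT0 : (0:ℝ) < T := lt_of_lt_of_le one_pos hT
  have huIcc : Set.uIcc (1:ℝ) T = Set.Icc 1 T := Set.uIcc_of_le hT
  have hpos : ∀ u ∈ Set.uIcc (1:ℝ) T, (0:ℝ) < u := by
    intro u hu; rw [huIcc] at hu; linarith [hu.1]
  have i01 : IntervalIntegrable hh volume 0 1 := by
    rw [intervalIntegrable_iff_integrableOn_Ioc_of_le zero_le_one]
    have := hh_intOn 1 1 one_pos
    simpa using this
  have i1T : IntervalIntegrable hh volume 1 T := by
    apply ContinuousOn.intervalIntegrable
    exact (Real.continuous_cos.continuousOn.sub continuousOn_const).div continuousOn_id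
      fun u hu => (hpos u hu).ne'
  have hadd := intervalIntegral.integral_add_adjacent_intervals i01 i1T
  have hFF : FF T = FF 1 + ∫ u in (1:ℝ)..T, hh u := by
    rw [FF, FF, ← intervalIntegral.integral_of_le hT0.le,
      ← intervalIntegral.integral_of_le zero_le_one, ← hadd]
  have hcontc : IntervalIntegrable (fun u => Real.cos u / u) volume 1 T := by
    apply ContinuousOn.intervalIntegrable
    exact Real.continuous_cos.continuousOn.div continuousOn_id fun u hu => (hpos u hu).ne'
  have hcont1 : IntervalIntegrable (fun u : ℝ => 1 / u) volume 1 T := by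
    apply ContinuousOn.intervalIntegrable
    exact continuousOn_const.div continuousOn_id fun u hu => (hpos u hu).ne'
  have hsplit : ∫ u in (1:ℝ)..T, hh u =
      (∫ u in (1:ℝ)..T, Real.cos u / u) - ∫ u in (1:ℝ)..T, 1 / u := by
    rw [← intervalIntegral.integral_sub hcontc hcont1]
    apply intervalIntegral.integral_congr
    intro u hu
    rw [hh, sub_div]
  have hlog : ∫ u in (1:ℝ)..T, 1 / u = Real.log T := by
    rw [integral_one_div (by rw [huIcc]; intro h; linarith [h.1] : (0:ℝ) ∉ Set.uIcc 1 T)]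
    simp
  rw [hFF, hsplit, hlog]
  ring

lemma gk_eq (k : ℕ) (hk : 1 ≤ k) :
    (fun x : ℝ => (Real.cos ((k:ℝ)*x) - 1)/x) = fun x => (k:ℝ) * hh ((k:ℝ)*x) := by
  have hk0 : (0:ℝ) < k := by exact_mod_cast hk
  funext x
  rcases eq_or_ne x 0 with rfl | hx
  · simp [hh]
  · simp only [hh]
    rw [mul_div_assoc', mul_div_mul_left _ _ hk0.ne']

lemma gk_int (k : ℕ) (hk : 1 ≤ k) (T : ℝ) :
    IntegrableOn (fun x : ℝ => (Real.cos ((k:ℝ)*x) - 1)/x) (Set.Ioc 0 T) := by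
  rw [gk_eq k hk]
  exact (hh_intOn k T (by exact_mod_cast hk)).const_mul _

lemma sum_eqOn (b : ℕ) (c : ℕ → ℝ) (hc : ∑ k ∈ Finset.Icc 1 b, c k = 0) (T : ℝ) :
    Set.EqOn (fun x : ℝ => (∑ k ∈ Finset.Icc 1 b, c k * Real.cos ((k : ℝ) * x)) / x)
      (fun x : ℝ => ∑ k ∈ Finset.Icc 1 b, c k * ((Real.cos ((k:ℝ)*x) - 1)/x))
      (Set.Ioc 0 T) := by
  intro x hx
  simp only
  have h1 : ∑ k ∈ Finset.Icc 1 b, c k * (Real.cos ((k:ℝ)*x) - 1)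
      = ∑ k ∈ Finset.Icc 1 b, c k * Real.cos ((k:ℝ)*x) := by
    simp [mul_sub, Finset.sum_sub_distrib, hc]
  rw [← h1, Finset.sum_div]
  exact Finset.sum_congr rfl fun k _ => (mul_div_assoc _ _ _)

lemma sum_intOn (b : ℕ) (c : ℕ → ℝ) (hc : ∑ k ∈ Finset.Icc 1 b, c k = 0) (T : ℝ) :
    IntegrableOn (fun x : ℝ => (∑ k ∈ Finset.Icc 1 b, c k * Real.cos ((k : ℝ) * x)) / x)
      (Set.Ioc 0 T) := by
  have hg : IntegrableOn
      (fun x : ℝ => ∑ k ∈ Finset.Icc 1 b, c k * ((Real.cos ((k:ℝ)*x) - 1)/x))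
      (Set.Ioc 0 T) :=
    integrable_finset_sum _ fun k hk => (gk_int k (Finset.mem_Icc.mp hk).1 T).const_mul _
  exact hg.congr_fun (fun x hx => (sum_eqOn b c hc T hx).symm) measurableSet_Ioc

lemma key (b : ℕ) (c : ℕ → ℝ) (hc : ∑ k ∈ Finset.Icc 1 b, c k = 0) :
    Tendsto
      (fun T : ℝ =>
        ∫ x in Set.Ioc 0 T, (∑ k ∈ Finset.Icc 1 b, c k * Real.cos ((k : ℝ) * x)) / x)
      atTop (𝓝 (-∑ k ∈ Finset.Icc 1 b, c k * Real.log k)) := by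
  obtain ⟨A, hA⟩ := FF_tendsto
  have heq : ∀ᶠ T : ℝ in atTop,
      (∫ x in Set.Ioc 0 T, (∑ k ∈ Finset.Icc 1 b, c k * Real.cos ((k : ℝ) * x)) / x)
        = (∑ k ∈ Finset.Icc 1 b, c k * (FF ((k:ℝ)*T) + Real.log ((k:ℝ)*T)))
          - ∑ k ∈ Finset.Icc 1 b, c k * Real.log k := by
    filter_upwards [eventually_gt_atTop (0:ℝ)] with T hT
    rw [setIntegral_congr_fun measurableSet_Ioc (sum_eqOn b c hc T),
      integral_finset_sum _ fun k hk =>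
        ((gk_int k (Finset.mem_Icc.mp hk).1 T).const_mul _)]
    have step : ∀ k ∈ Finset.Icc 1 b,
        ∫ x in Set.Ioc 0 T, c k * ((Real.cos ((k:ℝ)*x) - 1)/x) = c k * FF ((k:ℝ)*T) := by
      intro k hk
      rw [integral_const_mul, FF_sub k (Finset.mem_Icc.mp hk).1 T hT]
    rw [Finset.sum_congr rfl step]
    have expand : ∀ k ∈ Finset.Icc 1 b,
        c k * (FF ((k:ℝ)*T) + Real.log ((k:ℝ)*T))
          = c k * FF ((k:ℝ)*T) + c k * Real.log k + c k * Real.log T := by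
      intro k hk
      have hk1 : (1:ℕ) ≤ k := (Finset.mem_Icc.mp hk).1
      have hk0 : ((k:ℝ)) ≠ 0 := by positivity
      rw [Real.log_mul hk0 hT.ne']
      ring
    rw [Finset.sum_congr rfl expand]
    simp only [Finset.sum_add_distrib, ← Finset.sum_mul, hc]
    ring
  apply Tendsto.congr' (heq.mono fun T h => h.symm)
  have hsum : Tendsto
      (fun T : ℝ => ∑ k ∈ Finset.Icc 1 b, c k * (FF ((k:ℝ)*T) + Real.log ((k:ℝ)*T)))
      atTop (𝓝 (∑ k ∈ Finset.Icc 1 b, c k * A)) := by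
    apply tendsto_finset_sum
    intro k hk
    have hk0 : (0:ℝ) < k := by
      exact_mod_cast Nat.lt_of_lt_of_le Nat.zero_lt_one (Finset.mem_Icc.mp hk).1
    have hmul : Tendsto (fun T : ℝ => (k:ℝ) * T) atTop atTop :=
      Tendsto.const_mul_atTop hk0 tendsto_id
    exact (hA.comp hmul).const_mul _
  have hz : (∑ k ∈ Finset.Icc 1 b, c k * A) = 0 := by
    rw [← Finset.sum_mul, hc, zero_mul]
  rw [hz] at hsum
  have := hsum.sub (tendsto_const_nhds
    (x := ∑ k ∈ Finset.Icc 1 b, c k * Real.log k) (f := atTop))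
  simpa using this

lemma nonint (b : ℕ) (c : ℕ → ℝ) (hS : ∑ k ∈ Finset.Icc 1 b, c k ≠ 0)
    (hf : IntegrableOn (fun x : ℝ => (∑ k ∈ Finset.Icc 1 b, c k * Real.cos ((k : ℝ) * x)) / x)
      (Set.Ioc 0 1)) : False := by
  have hg : IntegrableOn
      (fun x : ℝ => ∑ k ∈ Finset.Icc 1 b, c k * ((Real.cos ((k:ℝ)*x) - 1)/x))
      (Set.Ioc 0 1) :=
    integrable_finset_sum _ fun k hk => (gk_int k (Finset.mem_Icc.mp hk).1 1).const_mul _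
  have hsub : IntegrableOn
      ((fun x : ℝ => (∑ k ∈ Finset.Icc 1 b, c k * Real.cos ((k : ℝ) * x)) / x) -
        fun x : ℝ => ∑ k ∈ Finset.Icc 1 b, c k * ((Real.cos ((k:ℝ)*x) - 1)/x))
      (Set.Ioc 0 1) := hf.sub hg
  have hSint : IntegrableOn (fun x : ℝ => (∑ k ∈ Finset.Icc 1 b, c k) * x⁻¹)
      (Set.Ioc 0 1) := by
    refine hsub.congr_fun (fun x hx => ?_) measurableSet_Ioc
    have hx0 : x ≠ 0 := ne_of_gt hx.1
    simp only [Pi.sub_apply]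
    have h1 : ∑ k ∈ Finset.Icc 1 b, c k * ((Real.cos ((k:ℝ)*x) - 1)/x)
        = (∑ k ∈ Finset.Icc 1 b, c k * Real.cos ((k:ℝ)*x)) / x
          - (∑ k ∈ Finset.Icc 1 b, c k) / x := by
      rw [← sub_div, ← Finset.sum_sub_distrib, Finset.sum_div]
      exact Finset.sum_congr rfl fun k _ => by rw [mul_div_assoc', mul_sub, mul_one]
    rw [h1]
    field_simp
    simp only [mul_comm x]
    ring
  have hinv : IntegrableOn (fun x : ℝ => x⁻¹) (Set.Ioo 0 1) := by
    have h2 : IntegrableOn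
        (fun x : ℝ => (∑ k ∈ Finset.Icc 1 b, c k)⁻¹ * ((∑ k ∈ Finset.Icc 1 b, c k) * x⁻¹))
        (Set.Ioc 0 1) := hSint.const_mul _
    have h3 : IntegrableOn (fun x : ℝ => x⁻¹) (Set.Ioc 0 1) := by
      refine h2.congr_fun (fun x hx => ?_) measurableSet_Ioc
      dsimp only
      rw [← mul_assoc, inv_mul_cancel₀ hS, one_mul]
    exact h3.mono_set Set.Ioo_subset_Ioc_self
  have hrpow : IntegrableOn (fun x : ℝ => x ^ (-1:ℝ)) (Set.Ioo 0 1) := by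
    refine hinv.congr_fun (fun x hx => ?_) measurableSet_Ioo
    rw [Real.rpow_neg_one]
  rw [intervalIntegral.integrableOn_Ioo_rpow_iff one_pos] at hrpow
  linarith


/-- For a positive integer `b` and reals `c 1, …, c b`, the improper integral
`∫₀^∞ (Σ_{k=1}^b c_k cos (k x)) / x dx` converges iff `Σ_{k=1}^b c_k = 0`, and in
that case its value is `-Σ_{k=1}^b c_k ln k`. -/
theorem stmt13 (b : ℕ) (hb : 0 < b) (c : ℕ → ℝ) :
    (((∀ T : ℝ, 0 < T →
        IntegrableOn
          (fun x : ℝ => (∑ k ∈ Finset.Icc 1 b, c k * Real.cos ((k : ℝ) * x)) / x)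
          (Set.Ioc 0 T)) ∧
      ∃ L : ℝ,
        Tendsto
          (fun T : ℝ =>
            ∫ x in Set.Ioc 0 T, (∑ k ∈ Finset.Icc 1 b, c k * Real.cos ((k : ℝ) * x)) / x)
          atTop (𝓝 L)) ↔
      ∑ k ∈ Finset.Icc 1 b, c k = 0) ∧
    (∑ k ∈ Finset.Icc 1 b, c k = 0 →
      Tendsto
        (fun T : ℝ =>
          ∫ x in Set.Ioc 0 T, (∑ k ∈ Finset.Icc 1 b, c k * Real.cos ((k : ℝ) * x)) / x)
        atTop (𝓝 (-∑ k ∈ Finset.Icc 1 b, c k * Real.log k))) := by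
  constructor
  · constructor
    · rintro ⟨hint, -⟩
      by_contra hS
      exact nonint b c hS (hint 1 one_pos)
    · intro hS
      exact ⟨fun T _ => sum_intOn b c hS T, ⟨_, key b c hS⟩⟩
  · exact key b c
end
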